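/- arXiv:1702.04296 — 6 statements merged into one kernel-verified Lean document; each statement's English description precedes it below -/
import Mathlib

section
/- A probability measure μ on {0,1}^2 is a color process (i.e., μ = Φ_p(ν) for some p ∈ [0,1] and ν ∈ RER_[2]) if and only if μ({(1,0)}) = μ({(0,1)}) and μ has non-negative pairwise correlation, i.e. μ({(1,1)}) ≥ (μ({(1,1)}) + μ({(1,0)})) · (μ({(1,1)}) + μ({(0,1)})). -/
open scoped Classical BigOperators

noncomputable instance (n : ℕ) : Fintype (Setoid (Fin n)) :=
  Fintype.ofInjective (fun s : Setoid (Fin n) => s.r)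
    (fun s t h => Setoid.ext fun a b => iff_of_eq (congrFun (congrFun h a) b))

/-- The weight a single block `B` receives in the color-process formula:
`p · 1[x ≡ 1 on B] + (1-p) · 1[x ≡ 0 on B]`. -/
noncomputable def blockW (n : ℕ) (p : ℝ) (x : Fin n → Bool) (B : Set (Fin n)) : ℝ :=
  (if ∀ i ∈ B, x i = true then p else 0) + (if ∀ i ∈ B, x i = false then 1 - p else 0)

/-- The probability that the color process of the deterministic partition `π` equals `x`. -/
noncomputable def partW (n : ℕ) (p : ℝ) (π : Setoid (Fin n)) (x : Fin n → Bool) : ℝ :=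
  ∏ᶠ B ∈ π.classes, blockW n p x B

/-- The color process `Φ_p(ν)` on `{0,1}^n`, given by its probability mass function. -/
noncomputable def Phi (n : ℕ) (p : ℝ) (ν : Setoid (Fin n) → ℝ) : (Fin n → Bool) → ℝ :=
  fun x => ∑ π : Setoid (Fin n), ν π * partW n p π x

/-- `ν` is a probability measure on the set of partitions of `{1,…,n}` (an RER). -/
def IsRER (n : ℕ) (ν : Setoid (Fin n) → ℝ) : Prop :=
  (∀ π, 0 ≤ ν π) ∧ ∑ π : Setoid (Fin n), ν π = 1

/-- The action of a permutation of `{1,…,n}` on partitions of `{1,…,n}`. -/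
def permSetoid {n : ℕ} (σ : Equiv.Perm (Fin n)) (π : Setoid (Fin n)) : Setoid (Fin n) where
  r a b := π.r (σ.symm a) (σ.symm b)
  iseqv := ⟨fun _ => π.iseqv.refl _, fun h => π.iseqv.symm h, fun h h' => π.iseqv.trans h h'⟩

/-- `ν` is exchangeable: invariant under every permutation of `{1,…,n}`. -/
def IsExch (n : ℕ) (ν : Setoid (Fin n) → ℝ) : Prop :=
  ∀ (σ : Equiv.Perm (Fin n)) (π : Setoid (Fin n)), ν (permSetoid σ π) = ν π

/- ### Auxiliary lemmas -/

lemma setoid_fin2 (π : Setoid (Fin 2)) : π = ⊥ ∨ π = ⊤ := by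
  by_cases h : π.r 0 1
  · right
    apply Setoid.ext
    intro a b
    simp only [Setoid.top_def]
    constructor
    · intro; trivial
    · intro _
      fin_cases a <;> fin_cases b
      · exact π.refl _
      · exact h
      · exact π.symm h
      · exact π.refl _
  · left
    apply Setoid.ext
    intro a b
    constructor
    · intro hab
      by_contra hne
      apply h
      fin_cases a <;> fin_cases b <;> simp_all
      exact h (π.symm hab)
    · rintro rfl; exact π.refl _

lemma bot_ne_top2 : (⊥ : Setoid (Fin 2)) ≠ ⊤ := by
  intro h
  have h2 : (⊥ : Setoid (Fin 2)).r 0 1 := h ▸ trivial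
  have h3 : (0 : Fin 2) = 1 := h2
  exact absurd h3 (by decide)

lemma sum_setoid2 (g : Setoid (Fin 2) → ℝ) : ∑ π : Setoid (Fin 2), g π = g ⊥ + g ⊤ := by
  rw [show (Finset.univ : Finset (Setoid (Fin 2))) = {⊥, ⊤} by
    ext π
    simp only [Finset.mem_univ, true_iff, Finset.mem_insert, Finset.mem_singleton]
    exact setoid_fin2 π]
  rw [Finset.sum_pair bot_ne_top2]

lemma classes_bot2 : (⊥ : Setoid (Fin 2)).classes = {({0} : Set (Fin 2)), {1}} := by
  ext s
  simp only [Setoid.classes, Set.mem_setOf_eq, Set.mem_insert_iff, Set.mem_singleton_iff]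
  constructor
  · rintro ⟨y, rfl⟩
    fin_cases y
    · left; ext z; exact Iff.rfl
    · right; ext z; exact Iff.rfl
  · rintro (rfl | rfl)
    · exact ⟨0, by ext z; exact Iff.rfl⟩
    · exact ⟨1, by ext z; exact Iff.rfl⟩

lemma classes_top2 : (⊤ : Setoid (Fin 2)).classes = {(Set.univ : Set (Fin 2))} := by
  ext s
  simp only [Setoid.classes, Set.mem_setOf_eq, Set.mem_singleton_iff]
  constructor
  · rintro ⟨y, rfl⟩
    ext z; simp [Setoid.top_def]
  · rintro rfl
    exact ⟨0, by ext z; simp [Setoid.top_def]⟩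

lemma partW_bot (p : ℝ) (x : Fin 2 → Bool) :
    partW 2 p ⊥ x = blockW 2 p x {0} * blockW 2 p x {1} := by
  rw [partW, classes_bot2, finprod_mem_pair]
  intro hh
  have h0 : (0 : Fin 2) ∈ ({0} : Set (Fin 2)) := rfl
  rw [hh] at h0
  exact absurd h0 (by decide)

lemma partW_top (p : ℝ) (x : Fin 2 → Bool) :
    partW 2 p ⊤ x = blockW 2 p x Set.univ := by
  rw [partW, classes_top2, finprod_mem_singleton]

lemma Phi_eval (p : ℝ) (ν : Setoid (Fin 2) → ℝ) (x : Fin 2 → Bool) :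
    Phi 2 p ν x = ν ⊥ * (blockW 2 p x {0} * blockW 2 p x {1}) +
      ν ⊤ * blockW 2 p x Set.univ := by
  show ∑ π : Setoid (Fin 2), ν π * partW 2 p π x = _
  rw [sum_setoid2 (fun π => ν π * partW 2 p π x), partW_bot, partW_top]

lemma Phi_tt (p : ℝ) (ν : Setoid (Fin 2) → ℝ) :
    Phi 2 p ν ![true, true] = ν ⊥ * (p * p) + ν ⊤ * p := by
  rw [Phi_eval]
  simp [blockW, Fin.forall_fin_two]

lemma Phi_tf (p : ℝ) (ν : Setoid (Fin 2) → ℝ) :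
    Phi 2 p ν ![true, false] = ν ⊥ * (p * (1 - p)) := by
  rw [Phi_eval]
  simp [blockW, Fin.forall_fin_two]

lemma Phi_ft (p : ℝ) (ν : Setoid (Fin 2) → ℝ) :
    Phi 2 p ν ![false, true] = ν ⊥ * ((1 - p) * p) := by
  rw [Phi_eval]
  simp [blockW, Fin.forall_fin_two]

lemma Phi_ff (p : ℝ) (ν : Setoid (Fin 2) → ℝ) :
    Phi 2 p ν ![false, false] = ν ⊥ * ((1 - p) * (1 - p)) + ν ⊤ * (1 - p) := by
  rw [Phi_eval]
  simp [blockW, Fin.forall_fin_two]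

lemma sum_bool2 (g : (Fin 2 → Bool) → ℝ) :
    ∑ x : Fin 2 → Bool, g x =
      g ![false,false] + g ![false,true] + g ![true,false] + g ![true,true] := by
  rw [← Equiv.sum_comp (piFinTwoEquiv fun _ => Bool).symm g, Fintype.sum_prod_type,
    Fintype.sum_bool]
  simp only [Fintype.sum_bool]
  have key : ∀ a b : Bool, (piFinTwoEquiv fun _ => Bool).symm (a, b) = ![a, b] := by
    intro a b
    funext i
    fin_cases i <;> simp [piFinTwoEquiv]
  rw [key, key, key, key]
  ring

lemma eta_bool2 (x : Fin 2 → Bool) : x = ![x 0, x 1] := by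
  funext i
  fin_cases i <;> rfl

/-- **Proposition (Steif–Tykesson, Proposition 2.5).**
A probability measure `μ` on `{0,1}^2` is a color process (i.e. `μ = Φ_p(ν)` for some
`p ∈ [0,1]` and `ν ∈ RER_[2]`) if and only if `μ((1,0)) = μ((0,1))` and `μ` has
non-negative pairwise correlation. -/
theorem colorProcess_two_points_characterization (μ : (Fin 2 → Bool) → ℝ)
    (hnonneg : ∀ x, 0 ≤ μ x) (hsum : ∑ x : Fin 2 → Bool, μ x = 1) :
    (∃ p : ℝ, 0 ≤ p ∧ p ≤ 1 ∧ ∃ ν : Setoid (Fin 2) → ℝ, IsRER 2 ν ∧ Phi 2 p ν = μ) ↔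
      (μ ![true, false] = μ ![false, true] ∧
        (μ ![true, true] + μ ![true, false]) * (μ ![true, true] + μ ![false, true]) ≤
          μ ![true, true]) := by
  constructor
  · rintro ⟨p, hp0, hp1, ν, ⟨hν0, hν1⟩, hPhi⟩
    have ha : 0 ≤ ν ⊥ := hν0 ⊥
    have hb : 0 ≤ ν ⊤ := hν0 ⊤
    have hab : ν ⊥ + ν ⊤ = 1 := by rw [← sum_setoid2 ν]; exact hν1
    have htt : μ ![true, true] = ν ⊥ * (p * p) + ν ⊤ * p := by
      rw [← hPhi]; exact (Phi_tt p ν).symm ▸ rfl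
    have htf : μ ![true, false] = ν ⊥ * (p * (1 - p)) := by rw [← hPhi, Phi_tf]
    have hft : μ ![false, true] = ν ⊥ * ((1 - p) * p) := by rw [← hPhi, Phi_ft]
    rw [← hPhi, Phi_tt, Phi_tf, Phi_ft]
    constructor
    · ring
    · have hbe : ν ⊤ = 1 - ν ⊥ := by linarith
      rw [hbe]
      nlinarith [mul_nonneg (mul_nonneg (by linarith : (0:ℝ) ≤ 1 - ν ⊥) hp0)
        (by linarith : (0:ℝ) ≤ 1 - p)]
  · rintro ⟨hsym, hcorr⟩
    set t := μ ![true, true] with ht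
    set c := μ ![true, false] with hc
    set f := μ ![false, false] with hf
    have hft : μ ![false, true] = c := hsym.symm
    have hsum4 : f + c + c + t = 1 := by
      rw [← hsum, sum_bool2 μ, hft]
    have hc0 : 0 ≤ c := hnonneg _
    have ht0 : 0 ≤ t := hnonneg _
    have hf0 : 0 ≤ f := hnonneg _
    have hcorr' : (t + c) * (t + c) ≤ t := by rw [hft] at hcorr; linarith [hcorr]
    set p := t + c with hpdef
    have hp0 : 0 ≤ p := by positivity
    have hp1 : p ≤ 1 := by simp only [hpdef]; linarith
    set a : ℝ := if p * (1 - p) = 0 then 0 else c / (p * (1 - p)) with hadef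
    -- key facts about a
    have hkey : a * (p * (1 - p)) = c := by
      by_cases h : p * (1 - p) = 0
      · have hc0' : c = 0 := by
          rcases mul_eq_zero.mp h with h1 | h1
          · -- p = 0, so t + c = 0, hence c = 0
            simp only [hpdef] at h1; linarith
          · -- p = 1, so f + c = 0, hence c = 0
            have : f + c = 1 - p := by simp only [hpdef]; linarith
            linarith
        simp [hadef, h, hc0']
      · simp only [hadef, if_neg h]
        exact div_mul_cancel₀ c h
    have ha0 : 0 ≤ a := by
      by_cases h : p * (1 - p) = 0
      · simp [hadef, h]
      · simp only [hadef, if_neg h]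
        have hpos : 0 < p * (1 - p) :=
          lt_of_le_of_ne (mul_nonneg hp0 (by linarith)) (Ne.symm h)
        positivity
    have ha1 : a ≤ 1 := by
      by_cases h : p * (1 - p) = 0
      · simp [hadef, h]
      · simp only [hadef, if_neg h]
        have hpos : 0 < p * (1 - p) :=
          lt_of_le_of_ne (mul_nonneg hp0 (by linarith)) (Ne.symm h)
        rw [div_le_one hpos]
        nlinarith
    set ν : Setoid (Fin 2) → ℝ := fun π => if π = ⊥ then a else 1 - a with hnudef
    have hnub : ν ⊥ = a := if_pos rfl
    have hnut : ν ⊤ = 1 - a := if_neg (Ne.symm bot_ne_top2)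
    refine ⟨p, hp0, hp1, ν, ⟨?_, ?_⟩, ?_⟩
    · intro π
      rcases setoid_fin2 π with rfl | rfl
      · rw [hnub]; exact ha0
      · rw [hnut]; linarith
    · rw [sum_setoid2, hnub, hnut]; ring
    · funext x
      rw [eta_bool2 x]
      cases hx0 : x 0 <;> cases hx1 : x 1
      · rw [Phi_ff, hnub, hnut]
        have h1p : 1 - p = f + c := by simp only [hpdef]; linarith
        linear_combination h1p - hkey
      · rw [Phi_ft, hnub, hft]
        linear_combination hkey
      · rw [Phi_tf, hnub]
        linear_combination hkey
      · rw [Phi_tt, hnub, hnut]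
        linear_combination hpdef - hkey
end

section
/- A probability measure μ on {0,1}^3 satisfies μ = Φ_{1/2}(ν) for some ν ∈ RER_[3] if and only if μ has non-negative pairwise correlations and is 0-1-symmetric. -/
open scoped Classical BigOperators

/-- The `μ`-probability of the event `E ⊆ {0,1}^n`. -/
noncomputable def prEv {n : ℕ} (μ : (Fin n → Bool) → ℝ) (E : Set (Fin n → Bool)) : ℝ :=
  ∑ x : Fin n → Bool, if x ∈ E then μ x else 0

/-- `μ` has non-negative pairwise correlations. -/
def NonnegCorr {n : ℕ} (μ : (Fin n → Bool) → ℝ) : Prop :=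
  ∀ i j : Fin n, i ≠ j →
    prEv μ {x | x i = true} * prEv μ {x | x j = true} ≤
      prEv μ {x | x i = true ∧ x j = true}

/-- `μ` is `0-1`-symmetric: invariant under flipping all the bits. -/
def ZeroOneSymm {n : ℕ} (μ : (Fin n → Bool) → ℝ) : Prop :=
  ∀ x : Fin n → Bool, μ (fun i => !(x i)) = μ x

/-- `μ` is exchangeable: invariant under every permutation of the coordinates. -/
def ExchMeasure {n : ℕ} (μ : (Fin n → Bool) → ℝ) : Prop :=
  ∀ (σ : Equiv.Perm (Fin n)) (x : Fin n → Bool), μ (x ∘ σ) = μ x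

section STAux

/-- kernel setoid of a function -/
def kerS (f : Fin 3 → Fin 3) : Setoid (Fin 3) :=
  ⟨fun a b => f a = f b, ⟨fun _ => rfl, Eq.symm, Eq.trans⟩⟩

@[simp] lemma kerS_apply (f : Fin 3 → Fin 3) (a b : Fin 3) : kerS f a b ↔ f a = f b := Iff.rfl

noncomputable def sB : Setoid (Fin 3) := kerS ![0,1,2]
noncomputable def s12 : Setoid (Fin 3) := kerS ![0,0,2]
noncomputable def s13 : Setoid (Fin 3) := kerS ![0,1,0]
noncomputable def s23 : Setoid (Fin 3) := kerS ![0,1,1]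
noncomputable def sT : Setoid (Fin 3) := kerS ![0,0,0]

@[simp] lemma sB_apply (a b : Fin 3) : sB a b ↔ (![0,1,2] : Fin 3 → Fin 3) a = ![0,1,2] b := Iff.rfl
@[simp] lemma s12_apply (a b : Fin 3) : s12 a b ↔ (![0,0,2] : Fin 3 → Fin 3) a = ![0,0,2] b := Iff.rfl
@[simp] lemma s13_apply (a b : Fin 3) : s13 a b ↔ (![0,1,0] : Fin 3 → Fin 3) a = ![0,1,0] b := Iff.rfl
@[simp] lemma s23_apply (a b : Fin 3) : s23 a b ↔ (![0,1,1] : Fin 3 → Fin 3) a = ![0,1,1] b := Iff.rfl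
@[simp] lemma sT_apply (a b : Fin 3) : sT a b ↔ (![0,0,0] : Fin 3 → Fin 3) a = ![0,0,0] b := Iff.rfl

lemma kerS_ne {f g : Fin 3 → Fin 3} {a b : Fin 3} (hf : f a = f b) (hg : ¬ g a = g b) :
    kerS f ≠ kerS g := by
  intro h
  exact hg (show (kerS g).r a b from h ▸ (show (kerS f).r a b from hf))

lemma neB12 : sB ≠ s12 :=
  (kerS_ne (f := ![0,0,2]) (g := ![0,1,2]) (a := 0) (b := 1) (by decide) (by decide)).symm
lemma neB13 : sB ≠ s13 :=
  (kerS_ne (f := ![0,1,0]) (g := ![0,1,2]) (a := 0) (b := 2) (by decide) (by decide)).symm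
lemma neB23 : sB ≠ s23 :=
  (kerS_ne (f := ![0,1,1]) (g := ![0,1,2]) (a := 1) (b := 2) (by decide) (by decide)).symm
lemma neBT : sB ≠ sT :=
  (kerS_ne (f := ![0,0,0]) (g := ![0,1,2]) (a := 0) (b := 1) (by decide) (by decide)).symm
lemma ne1213 : s12 ≠ s13 :=
  kerS_ne (f := ![0,0,2]) (g := ![0,1,0]) (a := 0) (b := 1) (by decide) (by decide)
lemma ne1223 : s12 ≠ s23 :=
  kerS_ne (f := ![0,0,2]) (g := ![0,1,1]) (a := 0) (b := 1) (by decide) (by decide)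
lemma ne12T : s12 ≠ sT :=
  (kerS_ne (f := ![0,0,0]) (g := ![0,0,2]) (a := 0) (b := 2) (by decide) (by decide)).symm
lemma ne1323 : s13 ≠ s23 :=
  kerS_ne (f := ![0,1,0]) (g := ![0,1,1]) (a := 0) (b := 2) (by decide) (by decide)
lemma ne13T : s13 ≠ sT :=
  (kerS_ne (f := ![0,0,0]) (g := ![0,1,0]) (a := 0) (b := 1) (by decide) (by decide)).symm
lemma ne23T : s23 ≠ sT :=
  (kerS_ne (f := ![0,0,0]) (g := ![0,1,1]) (a := 0) (b := 1) (by decide) (by decide)).symm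

lemma setoid3_cases (π : Setoid (Fin 3)) :
    π = sB ∨ π = s12 ∨ π = s13 ∨ π = s23 ∨ π = sT := by
  by_cases h01 : π.r 0 1 <;> by_cases h02 : π.r 0 2 <;> by_cases h12 : π.r 1 2
  · refine Or.inr (Or.inr (Or.inr (Or.inr ?_)))
    apply Setoid.ext; intro a b
    fin_cases a <;> fin_cases b <;> simp [sT, kerS] <;>
      first
        | exact π.refl _ | exact h01 | exact h02 | exact h12
        | exact π.symm h01 | exact π.symm h02 | exact π.symm h12
  · exact absurd (π.trans (π.symm h01) h02) h12
  · exact absurd (π.trans h01 h12) h02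
  · refine Or.inr (Or.inl ?_)
    have n20 : ¬ π.r 2 0 := fun h => h02 (π.symm h)
    have n21 : ¬ π.r 2 1 := fun h => h02 (π.trans h01 (π.symm h))
    apply Setoid.ext; intro a b
    fin_cases a <;> fin_cases b <;> simp [s12, kerS] <;>
      first
        | exact π.refl _ | exact h01 | exact π.symm h01
        | exact h02 | exact n20 | exact h12 | exact n21
  · exact absurd (π.trans h02 (π.symm h12)) h01
  · refine Or.inr (Or.inr (Or.inl ?_))
    have n10 : ¬ π.r 1 0 := fun h => h01 (π.symm h)
    have n21 : ¬ π.r 2 1 := fun h => h01 (π.trans h02 h)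
    have n12' : ¬ π.r 1 2 := fun h => n21 (π.symm h)
    apply Setoid.ext; intro a b
    fin_cases a <;> fin_cases b <;> simp [s13, kerS] <;>
      first
        | exact π.refl _ | exact h02 | exact π.symm h02
        | exact h01 | exact n10 | exact n12' | exact n21
  · refine Or.inr (Or.inr (Or.inr (Or.inl ?_)))
    have n10 : ¬ π.r 1 0 := fun h => h01 (π.symm h)
    have n20 : ¬ π.r 2 0 := fun h => h01 (π.symm (π.trans h12 h))
    apply Setoid.ext; intro a b
    fin_cases a <;> fin_cases b <;> simp [s23, kerS] <;>
      first
        | exact π.refl _ | exact h12 | exact π.symm h12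
        | exact h01 | exact n10 | exact h02 | exact n20
  · refine Or.inl ?_
    have n10 : ¬ π.r 1 0 := fun h => h01 (π.symm h)
    have n20 : ¬ π.r 2 0 := fun h => h02 (π.symm h)
    have n21 : ¬ π.r 2 1 := fun h => h12 (π.symm h)
    apply Setoid.ext; intro a b
    fin_cases a <;> fin_cases b <;> simp [sB, kerS] <;>
      first
        | exact π.refl _ | exact h01 | exact h02 | exact h12
        | exact n10 | exact n20 | exact n21

lemma univ_setoid3 : (Finset.univ : Finset (Setoid (Fin 3))) = {sB, s12, s13, s23, sT} := by
  ext π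
  simp only [Finset.mem_univ, true_iff, Finset.mem_insert, Finset.mem_singleton]
  exact setoid3_cases π

lemma sum_setoid3 (g : Setoid (Fin 3) → ℝ) :
    ∑ π : Setoid (Fin 3), g π = g sB + g s12 + g s13 + g s23 + g sT := by
  rw [univ_setoid3,
      Finset.sum_insert (by simp [neB12, neB13, neB23, neBT]),
      Finset.sum_insert (by simp [ne1213, ne1223, ne12T]),
      Finset.sum_insert (by simp [ne1323, ne13T]),
      Finset.sum_insert (by simp [ne23T]),
      Finset.sum_singleton]
  ring

lemma classes_sB : sB.classes = {({0} : Set (Fin 3)), {1}, {2}} := by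
  ext C
  simp only [Setoid.classes, Set.mem_setOf_eq, Set.mem_insert_iff, Set.mem_singleton_iff]
  constructor
  · rintro ⟨y, rfl⟩
    fin_cases y
    · left; ext x; fin_cases x <;> simp [sB, kerS]
    · right; left; ext x; fin_cases x <;> simp [sB, kerS]
    · right; right; ext x; fin_cases x <;> simp [sB, kerS]
  · rintro (rfl | rfl | rfl)
    · exact ⟨0, by ext x; fin_cases x <;> simp [sB, kerS]⟩
    · exact ⟨1, by ext x; fin_cases x <;> simp [sB, kerS]⟩
    · exact ⟨2, by ext x; fin_cases x <;> simp [sB, kerS]⟩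

lemma classes_s12 : s12.classes = {({0,1} : Set (Fin 3)), {2}} := by
  ext C
  simp only [Setoid.classes, Set.mem_setOf_eq, Set.mem_insert_iff, Set.mem_singleton_iff]
  constructor
  · rintro ⟨y, rfl⟩
    fin_cases y
    · left; ext x; fin_cases x <;> simp [s12, kerS]
    · left; ext x; fin_cases x <;> simp [s12, kerS]
    · right; ext x; fin_cases x <;> simp [s12, kerS]
  · rintro (rfl | rfl)
    · exact ⟨0, by ext x; fin_cases x <;> simp [s12, kerS]⟩
    · exact ⟨2, by ext x; fin_cases x <;> simp [s12, kerS]⟩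

lemma classes_s13 : s13.classes = {({0,2} : Set (Fin 3)), {1}} := by
  ext C
  simp only [Setoid.classes, Set.mem_setOf_eq, Set.mem_insert_iff, Set.mem_singleton_iff]
  constructor
  · rintro ⟨y, rfl⟩
    fin_cases y
    · left; ext x; fin_cases x <;> simp [s13, kerS]
    · right; ext x; fin_cases x <;> simp [s13, kerS]
    · left; ext x; fin_cases x <;> simp [s13, kerS]
  · rintro (rfl | rfl)
    · exact ⟨0, by ext x; fin_cases x <;> simp [s13, kerS]⟩
    · exact ⟨1, by ext x; fin_cases x <;> simp [s13, kerS]⟩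

lemma classes_s23 : s23.classes = {({1,2} : Set (Fin 3)), {0}} := by
  ext C
  simp only [Setoid.classes, Set.mem_setOf_eq, Set.mem_insert_iff, Set.mem_singleton_iff]
  constructor
  · rintro ⟨y, rfl⟩
    fin_cases y
    · right; ext x; fin_cases x <;> simp [s23, kerS]
    · left; ext x; fin_cases x <;> simp [s23, kerS]
    · left; ext x; fin_cases x <;> simp [s23, kerS]
  · rintro (rfl | rfl)
    · exact ⟨1, by ext x; fin_cases x <;> simp [s23, kerS]⟩
    · exact ⟨0, by ext x; fin_cases x <;> simp [s23, kerS]⟩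

lemma classes_sT : sT.classes = {(Set.univ : Set (Fin 3))} := by
  ext C
  simp only [Setoid.classes, Set.mem_setOf_eq, Set.mem_singleton_iff]
  constructor
  · rintro ⟨y, rfl⟩; ext x; simp [sT, kerS]; fin_cases y <;> fin_cases x <;> simp
  · rintro rfl; exact ⟨0, by ext x; simp [sT, kerS]; fin_cases x <;> simp⟩

lemma blockW_single_half (x : Fin 3 → Bool) (i : Fin 3) :
    blockW 3 (1/2) x {i} = 1/2 := by
  simp only [blockW, Set.mem_singleton_iff, forall_eq]
  cases h : x i <;> simp [h] <;> norm_num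

lemma blockW_pair_half (x : Fin 3 → Bool) (i j : Fin 3) :
    blockW 3 (1/2) x {i, j} = if x i = x j then 1/2 else 0 := by
  rw [blockW]
  cases hi : x i <;> cases hj : x j <;> simp [hi, hj] <;> norm_num

lemma blockW_univ_half (x : Fin 3 → Bool) :
    blockW 3 (1/2) x Set.univ = if x 0 = x 1 ∧ x 1 = x 2 then 1/2 else 0 := by
  have hall : ∀ b, (∀ k : Fin 3, x k = b) ↔ (x 0 = b ∧ x 1 = b ∧ x 2 = b) := by
    intro b
    constructor
    · intro h; exact ⟨h 0, h 1, h 2⟩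
    · rintro ⟨h0, h1, h2⟩ k; fin_cases k <;> assumption
  rw [blockW]
  cases h0 : x 0 <;> cases h1 : x 1 <;> cases h2 : x 2 <;> simp [hall, h0, h1, h2] <;> norm_num

lemma pair_ne_single {i j k : Fin 3} (h : i ≠ k) : ({i, j} : Set (Fin 3)) ≠ {k} := by
  intro hE
  have : i ∈ ({k} : Set (Fin 3)) := hE ▸ Set.mem_insert i {j}
  exact h (by simpa using this)

lemma partW_sB (x : Fin 3 → Bool) : partW 3 (1/2) sB x = 1/8 := by
  rw [partW, classes_sB,
      finprod_mem_insert _ (by simp) (Set.toFinite _),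
      finprod_mem_pair (by simp : ({1} : Set (Fin 3)) ≠ {2}),
      blockW_single_half, blockW_single_half, blockW_single_half]
  norm_num

lemma partW_s12 (x : Fin 3 → Bool) :
    partW 3 (1/2) s12 x = if x 0 = x 1 then 1/4 else 0 := by
  rw [partW, classes_s12, finprod_mem_pair (pair_ne_single (by decide)),
      blockW_pair_half, blockW_single_half]
  by_cases h : x 0 = x 1 <;> simp [h] <;> norm_num

lemma partW_s13 (x : Fin 3 → Bool) :
    partW 3 (1/2) s13 x = if x 0 = x 2 then 1/4 else 0 := by
  rw [partW, classes_s13, finprod_mem_pair (pair_ne_single (by decide)),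
      blockW_pair_half, blockW_single_half]
  by_cases h : x 0 = x 2 <;> simp [h] <;> norm_num

lemma partW_s23 (x : Fin 3 → Bool) :
    partW 3 (1/2) s23 x = if x 1 = x 2 then 1/4 else 0 := by
  rw [partW, classes_s23, finprod_mem_pair (pair_ne_single (by decide)),
      blockW_pair_half, blockW_single_half]
  by_cases h : x 1 = x 2 <;> simp [h] <;> norm_num

lemma partW_sT (x : Fin 3 → Bool) :
    partW 3 (1/2) sT x = if x 0 = x 1 ∧ x 1 = x 2 then 1/2 else 0 := by
  rw [partW, classes_sT, finprod_mem_singleton, blockW_univ_half]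

lemma Phi_eval_s9 (ν : Setoid (Fin 3) → ℝ) (x : Fin 3 → Bool) :
    Phi 3 (1/2) ν x =
      ν sB * (1/8) + ν s12 * (if x 0 = x 1 then 1/4 else 0) +
        ν s13 * (if x 0 = x 2 then 1/4 else 0) + ν s23 * (if x 1 = x 2 then 1/4 else 0) +
        ν sT * (if x 0 = x 1 ∧ x 1 = x 2 then 1/2 else 0) := by
  rw [Phi, sum_setoid3 (fun π => ν π * partW 3 (1/2) π x),
      partW_sB, partW_s12, partW_s13, partW_s23, partW_sT]

lemma sum_pi3 (F : (Fin 3 → Bool) → ℝ) :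
    ∑ x : Fin 3 → Bool, F x =
      F ![true,true,true] + F ![true,true,false] + F ![true,false,true] + F ![true,false,false] +
      F ![false,true,true] + F ![false,true,false] + F ![false,false,true] +
      F ![false,false,false] := by
  rw [← Equiv.sum_comp
      (⟨fun p => ![p.1, p.2.1, p.2.2], fun x => (x 0, x 1, x 2), fun _ => rfl,
        fun x => by funext i; fin_cases i <;> rfl⟩ : Bool × Bool × Bool ≃ (Fin 3 → Bool)) F]
  simp only [Fintype.sum_prod_type, Fintype.sum_bool, Equiv.coe_fn_mk, DFunLike.coe, EquivLike.coe]
  ring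

lemma prEv_eval (μ : (Fin 3 → Bool) → ℝ) (E : Set (Fin 3 → Bool)) :
    prEv μ E =
      (if ![true,true,true] ∈ E then μ ![true,true,true] else 0) +
      (if ![true,true,false] ∈ E then μ ![true,true,false] else 0) +
      (if ![true,false,true] ∈ E then μ ![true,false,true] else 0) +
      (if ![true,false,false] ∈ E then μ ![true,false,false] else 0) +
      (if ![false,true,true] ∈ E then μ ![false,true,true] else 0) +
      (if ![false,true,false] ∈ E then μ ![false,true,false] else 0) +
      (if ![false,false,true] ∈ E then μ ![false,false,true] else 0) +
      (if ![false,false,false] ∈ E then μ ![false,false,false] else 0) := by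
  rw [prEv, sum_pi3]

end STAux

set_option maxHeartbeats 1000000
/-- **Proposition (Steif–Tykesson, Proposition 2.7).**
A probability measure `μ` on `{0,1}^3` satisfies `μ = Φ_{1/2}(ν)` for some `ν ∈ RER_[3]`
if and only if `μ` has non-negative pairwise correlations and is `0-1`-symmetric. -/
theorem colorProcess_three_points_half_characterization (μ : (Fin 3 → Bool) → ℝ)
    (hnonneg : ∀ x, 0 ≤ μ x) (hsum : ∑ x : Fin 3 → Bool, μ x = 1) :
    (∃ ν : Setoid (Fin 3) → ℝ, IsRER 3 ν ∧ Phi 3 (1/2) ν = μ) ↔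
      (NonnegCorr μ ∧ ZeroOneSymm μ) := by
  constructor
  · rintro ⟨ν, ⟨hν0, hν1⟩, rfl⟩
    rw [sum_setoid3] at hν1
    have h0B := hν0 sB; have h012 := hν0 s12; have h013 := hν0 s13
    have h023 := hν0 s23; have h0T := hν0 sT
    constructor
    · intro i j hij
      have h3 : ∀ k : Fin 3, k = 0 ∨ k = 1 ∨ k = 2 := by decide
      rcases h3 i with rfl | rfl | rfl <;> rcases h3 j with rfl | rfl | rfl <;>
        first
          | exact absurd rfl hij
          | (simp only [prEv_eval, Set.mem_setOf_eq, Phi_eval_s9]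
             norm_num [Matrix.cons_val_two]
             nlinarith [h0B, h012, h013, h023, h0T, hν1])
    · intro x
      rw [Phi_eval_s9, Phi_eval_s9]
      cases h0 : x 0 <;> cases h1 : x 1 <;> cases h2 : x 2 <;> simp [h0, h1, h2]
  · rintro ⟨hcorr, hsymm⟩
    have e1 : μ ![false,false,false] = μ ![true,true,true] := by
      have h := hsymm ![true,true,true]
      rwa [show (fun i => !(![true,true,true] i)) = ![false,false,false] from by
        funext i; fin_cases i <;> rfl] at h
    have e2 : μ ![false,false,true] = μ ![true,true,false] := by
      have h := hsymm ![true,true,false]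
      rwa [show (fun i => !(![true,true,false] i)) = ![false,false,true] from by
        funext i; fin_cases i <;> rfl] at h
    have e3 : μ ![false,true,false] = μ ![true,false,true] := by
      have h := hsymm ![true,false,true]
      rwa [show (fun i => !(![true,false,true] i)) = ![false,true,false] from by
        funext i; fin_cases i <;> rfl] at h
    have e4 : μ ![true,false,false] = μ ![false,true,true] := by
      have h := hsymm ![false,true,true]
      rwa [show (fun i => !(![false,true,true] i)) = ![true,false,false] from by
        funext i; fin_cases i <;> rfl] at h
    obtain ⟨M, hM⟩ : ∃ r, μ ![true,true,true] = r := ⟨_, rfl⟩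
    obtain ⟨A, hA⟩ : ∃ r, μ ![true,true,false] = r := ⟨_, rfl⟩
    obtain ⟨B, hB⟩ : ∃ r, μ ![true,false,true] = r := ⟨_, rfl⟩
    obtain ⟨C, hC⟩ : ∃ r, μ ![false,true,true] = r := ⟨_, rfl⟩
    have v5 : μ ![false,false,false] = M := e1.trans hM
    have v6 : μ ![false,false,true] = A := e2.trans hA
    have v7 : μ ![false,true,false] = B := e3.trans hB
    have v8 : μ ![true,false,false] = C := e4.trans hC
    have hM0 : 0 ≤ M := hM ▸ hnonneg _
    have hA0 : 0 ≤ A := hA ▸ hnonneg _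
    have hB0 : 0 ≤ B := hB ▸ hnonneg _
    have hC0 : 0 ≤ C := hC ▸ hnonneg _
    rw [sum_pi3, hM, hA, hB, hC, v5, v6, v7, v8] at hsum
    have hS : M + A + B + C = 1/2 := by linarith
    have h01 := hcorr 0 1 (by decide)
    have h02 := hcorr 0 2 (by decide)
    have h12 := hcorr 1 2 (by decide)
    simp only [prEv_eval, Set.mem_setOf_eq] at h01 h02 h12
    norm_num [Matrix.cons_val_two] at h01 h02 h12
    simp only [hM, hA, hB, hC, v5, v6, v7, v8] at h01 h02 h12
    have f1 : M + A + B + C = 1/2 := hS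
    have f2 : M + A + C + B = 1/2 := by linarith
    have f3 : M + B + C + A = 1/2 := by linarith
    rw [f1, f2] at h01
    rw [f1, f3] at h02
    rw [f2, f3] at h12
    have h01' : 1/4 ≤ M + A := by linarith
    have h02' : 1/4 ≤ M + B := by linarith
    have h12' : 1/4 ≤ M + C := by linarith
    obtain ⟨T, hT0, hTr, hTA, hTB, hTC⟩ :
        ∃ T : ℝ, 0 ≤ T ∧ 4*(A+B+C-M) ≤ T ∧ T ≤ 8*A ∧ T ≤ 8*B ∧ T ≤ 8*C :=
      ⟨max 0 (4*(A+B+C-M)), le_max_left _ _, le_max_right _ _,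
        max_le (by linarith) (by linarith), max_le (by linarith) (by linarith),
        max_le (by linarith) (by linarith)⟩
    refine ⟨fun π =>
      if π = sB then T
      else if π = s12 then 4*A - T/2
      else if π = s13 then 4*B - T/2
      else if π = s23 then 4*C - T/2
      else if π = sT then 2*M - 2*(A+B+C) + T/2
      else 0, ⟨?_, ?_⟩, ?_⟩
    · intro π
      rcases setoid3_cases π with rfl | rfl | rfl | rfl | rfl
      · simp only [if_pos rfl, eq_self_iff_true, if_true, eq_self_iff_true, if_true]; exact hT0
      · simp only [if_neg (Ne.symm neB12), if_pos rfl, eq_self_iff_true, if_true, eq_self_iff_true, if_true]; linarith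
      · simp only [if_neg (Ne.symm neB13), if_neg (Ne.symm ne1213), if_pos rfl, eq_self_iff_true, if_true, eq_self_iff_true, if_true]; linarith
      · simp only [if_neg (Ne.symm neB23), if_neg (Ne.symm ne1223), if_neg (Ne.symm ne1323),
            if_pos rfl, eq_self_iff_true, if_true, eq_self_iff_true, if_true]; linarith
      · simp only [if_neg (Ne.symm neBT), if_neg (Ne.symm ne12T), if_neg (Ne.symm ne13T),
            if_neg (Ne.symm ne23T), if_pos rfl, eq_self_iff_true, if_true, eq_self_iff_true, if_true]; linarith
    · rw [sum_setoid3]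
      simp only [if_pos rfl, eq_self_iff_true, if_true,
          if_neg (Ne.symm neB12), if_pos rfl, eq_self_iff_true, if_true,
          if_neg (Ne.symm neB13), if_neg (Ne.symm ne1213), if_pos rfl, eq_self_iff_true, if_true,
          if_neg (Ne.symm neB23), if_neg (Ne.symm ne1223), if_neg (Ne.symm ne1323), if_pos rfl, eq_self_iff_true, if_true,
          if_neg (Ne.symm neBT), if_neg (Ne.symm ne12T), if_neg (Ne.symm ne13T),
          if_neg (Ne.symm ne23T), if_pos rfl, eq_self_iff_true, if_true, eq_self_iff_true, if_true]
      linarith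
    · funext x
      rw [Phi_eval_s9]
      simp only [if_pos rfl, eq_self_iff_true, if_true,
          if_neg (Ne.symm neB12), if_pos rfl, eq_self_iff_true, if_true,
          if_neg (Ne.symm neB13), if_neg (Ne.symm ne1213), if_pos rfl, eq_self_iff_true, if_true,
          if_neg (Ne.symm neB23), if_neg (Ne.symm ne1223), if_neg (Ne.symm ne1323), if_pos rfl, eq_self_iff_true, if_true,
          if_neg (Ne.symm neBT), if_neg (Ne.symm ne12T), if_neg (Ne.symm ne13T),
          if_neg (Ne.symm ne23T), if_pos rfl, eq_self_iff_true, if_true, eq_self_iff_true, if_true]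
      have hx : μ x = μ ![x 0, x 1, x 2] := by
        congr 1; funext i; fin_cases i <;> rfl
      rw [hx]
      cases h0 : x 0 <;> cases h1 : x 1 <;> cases h2 : x 2 <;>
        simp only [hM, hA, hB, hC, v5, v6, v7, v8] <;>
        norm_num
      all_goals linarith
end

section
/- For each n ≥ 4 there exists a probability measure μ on {0,1}^n which is exchangeable, 0-1-symmetric, and has non-negative pairwise correlations, but which is not equal to Φ_{1/2}(ν) for any ν ∈ RER_[n]. -/
open scoped Classical BigOperators

noncomputable def sgn (b : Bool) : ℝ := if b then -1 else 1

noncomputable def chi {n : ℕ} (S : Finset (Fin n)) (x : Fin n → Bool) : ℝ :=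
  ∏ i ∈ S, sgn (x i)

lemma sgn_not (b : Bool) : sgn (!b) = - sgn b := by cases b <;> simp [sgn]

lemma sum_prod_bool {ι : Type*} [Fintype ι] [DecidableEq ι] (g : ι → Bool → ℝ) :
    ∑ x : ι → Bool, ∏ i, g i (x i) = ∏ i, (g i true + g i false) := by
  calc ∑ x : ι → Bool, ∏ i, g i (x i)
      = ∑ x ∈ Fintype.piFinset (fun _ : ι => (Finset.univ : Finset Bool)), ∏ i, g i (x i) := by
        rw [Fintype.piFinset_univ]
    _ = ∏ i, ∑ b : Bool, g i b := (Finset.prod_univ_sum _ _).symm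
    _ = ∏ i, (g i true + g i false) := by simp

lemma chi_as_prod_univ {n : ℕ} (S : Finset (Fin n)) (x : Fin n → Bool) :
    chi S x = ∏ i, (if i ∈ S then sgn (x i) else 1) := by
  rw [chi, Finset.prod_ite_mem, Finset.univ_inter]

lemma sum_chi {n : ℕ} {S : Finset (Fin n)} (hS : S.Nonempty) :
    ∑ x : Fin n → Bool, chi S x = 0 := by
  simp only [chi_as_prod_univ]
  rw [sum_prod_bool (fun i b => if i ∈ S then sgn b else 1)]
  obtain ⟨i₀, hi₀⟩ := hS
  apply Finset.prod_eq_zero (Finset.mem_univ i₀)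
  simp [hi₀, sgn]

lemma sum_chi_mul_chi {n : ℕ} {S T : Finset (Fin n)} (hST : S ≠ T) :
    ∑ x : Fin n → Bool, chi S x * chi T x = 0 := by
  simp only [chi_as_prod_univ, ← Finset.prod_mul_distrib]
  rw [sum_prod_bool (fun i b => (if i ∈ S then sgn b else 1) * (if i ∈ T then sgn b else 1))]
  obtain ⟨i₀, hi₀⟩ : ∃ i, (i ∈ S ∧ i ∉ T) ∨ (i ∈ T ∧ i ∉ S) := by
    by_contra hc
    push_neg at hc
    apply hST
    ext i
    constructor
    · intro h; by_contra h'; exact h' ((hc i).1 h)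
    · intro h; by_contra h'; exact h' ((hc i).2 h)
  apply Finset.prod_eq_zero (Finset.mem_univ i₀)
  rcases hi₀ with ⟨h1, h2⟩ | ⟨h1, h2⟩ <;> simp [h1, h2, sgn]

lemma sum_chi_sq {n : ℕ} (S : Finset (Fin n)) :
    ∑ x : Fin n → Bool, chi S x * chi S x = 2 ^ n := by
  simp only [chi_as_prod_univ, ← Finset.prod_mul_distrib]
  rw [sum_prod_bool (fun i b => (if i ∈ S then sgn b else 1) * (if i ∈ S then sgn b else 1))]
  rw [Finset.prod_congr rfl (fun i _ => show _ = (2:ℝ) by by_cases h : i ∈ S <;> simp [h, sgn] <;> norm_num)]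
  simp [Finset.card_univ]

noncomputable def ind {n : ℕ} (A : Finset (Fin n)) (x : Fin n → Bool) : ℝ :=
  ∏ i ∈ A, (if x i = true then 1 else 0)

lemma ind_as_prod_univ {n : ℕ} (A : Finset (Fin n)) (x : Fin n → Bool) :
    ind A x = ∏ i, (if i ∈ A then (if x i = true then (1:ℝ) else 0) else 1) := by
  rw [ind, Finset.prod_ite_mem, Finset.univ_inter]

lemma sum_ind_chi {n : ℕ} {A S : Finset (Fin n)} (h : ¬ S ⊆ A) :
    ∑ x : Fin n → Bool, ind A x * chi S x = 0 := by
  simp only [ind_as_prod_univ, chi_as_prod_univ, ← Finset.prod_mul_distrib]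
  rw [sum_prod_bool (fun i b =>
    (if i ∈ A then (if b = true then (1:ℝ) else 0) else 1) * (if i ∈ S then sgn b else 1))]
  obtain ⟨k, hkS, hkA⟩ := Finset.not_subset.mp h
  apply Finset.prod_eq_zero (Finset.mem_univ k)
  simp [hkS, hkA, sgn]

lemma sum_ind {n : ℕ} (A : Finset (Fin n)) :
    ∑ x : Fin n → Bool, ind A x = 2 ^ (n - A.card) := by
  simp only [ind_as_prod_univ]
  rw [sum_prod_bool (fun i b => if i ∈ A then (if b = true then (1:ℝ) else 0) else 1)]
  rw [Finset.prod_congr rfl (fun i _ => show _ = if i ∈ Aᶜ then (2:ℝ) else 1 by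
    by_cases h : i ∈ A <;> simp [h] <;> norm_num)]
  rw [Finset.prod_ite_mem, Finset.univ_inter, Finset.prod_const, Finset.card_compl,
    Fintype.card_fin]

section cls
variable {n : ℕ} (π : Setoid (Fin n))

noncomputable def cls : Quotient π → Set (Fin n) :=
  Quotient.lift (fun a => {x | π.r x a}) (by
    intro a b hab
    ext x
    exact ⟨fun h => π.iseqv.trans h hab, fun h => π.iseqv.trans h (π.iseqv.symm hab)⟩)

lemma mem_cls_mk {i a : Fin n} : i ∈ cls π (Quotient.mk π a) ↔ π.r i a := Iff.rfl

lemma mem_cls {i : Fin n} {q : Quotient π} : i ∈ cls π q ↔ Quotient.mk π i = q := by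
  induction q using Quotient.ind with
  | _ a => rw [mem_cls_mk, Quotient.eq]

lemma classes_eq_range : π.classes = Set.range (cls π) := by
  ext s
  constructor
  · rintro ⟨y, rfl⟩; exact ⟨Quotient.mk π y, rfl⟩
  · rintro ⟨q, rfl⟩
    induction q using Quotient.ind with
    | _ a => exact ⟨a, rfl⟩

lemma cls_injective : Function.Injective (cls π) := by
  intro q q' h
  induction q using Quotient.ind with
  | _ a =>
    induction q' using Quotient.ind with
    | _ b =>
      have ha : a ∈ cls π (Quotient.mk π a) := π.iseqv.refl a
      rw [h] at ha
      exact Quotient.sound (mem_cls_mk π |>.mp ha)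

end cls


section partw
variable {n : ℕ} (π : Setoid (Fin n))

noncomputable instance : Fintype (Quotient π) := Fintype.ofFinite _

lemma partW_eq (p : ℝ) (x : Fin n → Bool) :
    partW n p π x = ∏ q : Quotient π, blockW n p x (cls π q) := by
  rw [partW, classes_eq_range, finprod_mem_range (cls_injective π),
    finprod_eq_prod_of_fintype]

lemma partW_eq_zero {p : ℝ} {x : Fin n → Bool}
    (h : ¬ ∀ i j, π.r i j → x i = x j) : partW n p π x = 0 := by
  push_neg at h
  obtain ⟨i, j, hij, hx⟩ := h
  rw [partW_eq]
  apply Finset.prod_eq_zero (Finset.mem_univ (Quotient.mk π i))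
  have hi : i ∈ cls π (Quotient.mk π i) := π.iseqv.refl i
  have hj : j ∈ cls π (Quotient.mk π i) := π.iseqv.symm hij
  rw [blockW]
  rw [if_neg, if_neg]
  · ring
  · intro hall
    cases hxi : x i <;> cases hxj : x j <;>
      simp_all [hall i hi, hall j hj]
  · intro hall
    cases hxi : x i <;> cases hxj : x j <;>
      simp_all [hall i hi, hall j hj]

lemma term_eq (S : Finset (Fin n)) (c : Quotient π → Bool) :
    partW n (1/2) π (fun k => c (Quotient.mk π k)) *
      chi S (fun k => c (Quotient.mk π k))
    = ∏ q : Quotient π,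
        ((1/2) * sgn (c q) ^ (S.filter (fun i => Quotient.mk π i = q)).card) := by
  have h1 : partW n (1/2) π (fun k => c (Quotient.mk π k)) = ∏ q : Quotient π, (1/2 : ℝ) := by
    rw [partW_eq]
    apply Finset.prod_congr rfl
    intro q _
    have hout : q.out ∈ cls π q := by rw [mem_cls]; exact Quotient.out_eq q
    have hc : ∀ i ∈ cls π q, c (Quotient.mk π i) = c q := by
      intro i hi; rw [(mem_cls π).mp hi]
    rw [blockW]
    cases hcq : c q with
    | false =>
      have ha : ¬ (∀ i ∈ cls π q, c (Quotient.mk π i) = true) := fun hall => by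
        have := hall q.out hout
        rw [hc q.out hout, hcq] at this
        exact Bool.noConfusion this
      have hb : ∀ i ∈ cls π q, c (Quotient.mk π i) = false := fun i hi => by
        rw [hc i hi, hcq]
      rw [if_neg ha, if_pos hb]
      norm_num
    | true =>
      have ha : ∀ i ∈ cls π q, c (Quotient.mk π i) = true := fun i hi => by
        rw [hc i hi, hcq]
      have hb : ¬ (∀ i ∈ cls π q, c (Quotient.mk π i) = false) := fun hall => by
        have := hall q.out hout
        rw [hc q.out hout, hcq] at this
        exact Bool.noConfusion this
      rw [if_pos ha, if_neg hb]
      norm_num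
  have h2 : chi S (fun k => c (Quotient.mk π k))
      = ∏ q : Quotient π, sgn (c q) ^ (S.filter (fun i => Quotient.mk π i = q)).card := by
    rw [chi, ← Finset.prod_fiberwise S (fun i => Quotient.mk π i)
      (fun i => sgn (c (Quotient.mk π i)))]
    apply Finset.prod_congr rfl
    intro q _
    rw [Finset.prod_congr rfl (fun i hi => show sgn (c (Quotient.mk π i)) = sgn (c q) by
      rw [(Finset.mem_filter.mp hi).2]), Finset.prod_const]
  rw [h1, h2, ← Finset.prod_mul_distrib]

lemma sum_partW_chi (S : Finset (Fin n)) :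
    ∑ x : Fin n → Bool, partW n (1/2) π x * chi S x
      = ∏ q : Quotient π,
          (if Even (S.filter (fun i => Quotient.mk π i = q)).card then (1:ℝ) else 0) := by
  have hfil : ∑ x : Fin n → Bool, partW n (1/2) π x * chi S x
      = ∑ x ∈ Finset.univ.filter (fun x : Fin n → Bool => ∀ i j, π.r i j → x i = x j),
          partW n (1/2) π x * chi S x := by
    rw [Finset.sum_filter_of_ne]
    intro x _ hne
    by_contra h
    exact hne (by rw [partW_eq_zero π h, zero_mul])
  rw [hfil]
  have hbij : ∑ x ∈ Finset.univ.filter (fun x : Fin n → Bool => ∀ i j, π.r i j → x i = x j),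
        partW n (1/2) π x * chi S x
      = ∑ c : Quotient π → Bool,
          ∏ q : Quotient π,
            ((1/2) * sgn (c q) ^ (S.filter (fun i => Quotient.mk π i = q)).card) := by
    apply Finset.sum_nbij' (i := fun x => fun q : Quotient π => x q.out)
      (j := fun c => fun k => c (Quotient.mk π k))
    · intro a _; exact Finset.mem_univ _
    · intro c _
      simp only [Finset.mem_filter]
      refine ⟨Finset.mem_univ _, fun i j hij => ?_⟩
      rw [Quotient.sound hij]
    · intro x hx
      funext k
      simp only [Finset.mem_filter] at hx
      exact hx.2 _ _ (Quotient.exact (Quotient.out_eq (Quotient.mk π k)) : _)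
    · intro c _
      funext q
      exact congrArg c (Quotient.out_eq q)
    · intro x hx
      have hx' : (fun k => (fun q : Quotient π => x q.out) (Quotient.mk π k)) = x := by
        funext k
        simp only [Finset.mem_filter] at hx
        exact hx.2 _ _ (Quotient.exact (Quotient.out_eq (Quotient.mk π k)) : _)
      conv_lhs => rw [← hx']
      exact term_eq π S (fun q => x q.out)
  rw [hbij, sum_prod_bool (fun q b =>
    (1/2 : ℝ) * sgn b ^ (S.filter (fun i => Quotient.mk π i = q)).card)]
  apply Finset.prod_congr rfl
  intro q _
  set m := (S.filter (fun i => Quotient.mk π i = q)).card with hm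
  rcases Nat.even_or_odd m with he | ho
  · rw [if_pos he]
    simp [sgn, he.neg_one_pow]
    norm_num
  · rw [if_neg (Nat.not_even_iff_odd.mpr ho)]
    simp [sgn, ho.neg_one_pow]

end partw

section Tcor
variable {n : ℕ} (π : Setoid (Fin n))

lemma T_nonneg (S : Finset (Fin n)) :
    0 ≤ ∑ x : Fin n → Bool, partW n (1/2) π x * chi S x := by
  rw [sum_partW_chi]
  apply Finset.prod_nonneg
  intro q _
  split <;> norm_num

lemma T_pair {i j : Fin n} (hij : i ≠ j) (hr : π.r i j) :
    ∑ x : Fin n → Bool, partW n (1/2) π x * chi {i, j} x = 1 := by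
  rw [sum_partW_chi]
  apply Finset.prod_eq_one
  intro q _
  have hijq : Quotient.mk π i = Quotient.mk π j := Quotient.sound hr
  rw [if_pos]
  by_cases h : Quotient.mk π i = q
  · have hfil : ({i, j} : Finset (Fin n)).filter (fun k => Quotient.mk π k = q)
        = {i, j} := by
      apply Finset.filter_true_of_mem
      intro k hk
      rcases Finset.mem_insert.mp hk with rfl | hk
      · exact h
      · rw [Finset.mem_singleton.mp hk, ← hijq]; exact h
    rw [hfil, Finset.card_pair hij]
    exact even_two
  · have hfil : ({i, j} : Finset (Fin n)).filter (fun k => Quotient.mk π k = q)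
        = ∅ := by
      apply Finset.filter_false_of_mem
      intro k hk
      rcases Finset.mem_insert.mp hk with rfl | hk
      · exact h
      · rw [Finset.mem_singleton.mp hk, ← hijq]; exact h
    rw [hfil, Finset.card_empty]
    exact Even.zero

lemma T_zero_of_no_rel {S : Finset (Fin n)} (hS : S.Nonempty)
    (h : ∀ i ∈ S, ∀ j ∈ S, i ≠ j → ¬ π.r i j) :
    ∑ x : Fin n → Bool, partW n (1/2) π x * chi S x = 0 := by
  rw [sum_partW_chi]
  obtain ⟨i₀, hi₀⟩ := hS
  apply Finset.prod_eq_zero (Finset.mem_univ (Quotient.mk π i₀))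
  have hfil : S.filter (fun k => Quotient.mk π k = Quotient.mk π i₀) = {i₀} := by
    ext k
    simp only [Finset.mem_filter, Finset.mem_singleton]
    constructor
    · rintro ⟨hkS, hk⟩
      by_contra hne
      exact h k hkS i₀ hi₀ hne (Quotient.exact hk)
    · rintro rfl
      exact ⟨hi₀, rfl⟩
  rw [hfil, Finset.card_singleton, if_neg (by simp)]

end Tcor

lemma chi_comp_perm {n : ℕ} (σ : Equiv.Perm (Fin n)) (S : Finset (Fin n)) (x : Fin n → Bool) :
    chi S (x ∘ σ) = chi (S.image σ) x := by
  rw [chi, chi, Finset.prod_image (fun a _ b _ h => σ.injective h)]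
  rfl

lemma chi_flip {n : ℕ} (S : Finset (Fin n)) (x : Fin n → Bool) :
    chi S (fun i => !(x i)) = (-1) ^ S.card * chi S x := by
  rw [chi, chi, ← Finset.prod_const, ← Finset.prod_mul_distrib]
  apply Finset.prod_congr rfl
  intro i _
  rw [sgn_not]
  ring

/-- **Proposition (Steif–Tykesson, Proposition 2.8).**
For each `n ≥ 4` there is a probability measure `μ` on `{0,1}^n` which is exchangeable,
`0-1`-symmetric and has non-negative pairwise correlations, but which is not equal to
`Φ_{1/2}(ν)` for any `ν ∈ RER_[n]`. -/
theorem exists_exch_symm_nonnegCorr_not_colorProcess (n : ℕ) (hn : 4 ≤ n) :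
    ∃ μ : (Fin n → Bool) → ℝ, (∀ x, 0 ≤ μ x) ∧ (∑ x : Fin n → Bool, μ x = 1) ∧
      ExchMeasure μ ∧ ZeroOneSymm μ ∧ NonnegCorr μ ∧
      ∀ ν : Setoid (Fin n) → ℝ, IsRER n ν → Phi n (1/2) ν ≠ μ := by
  -- the family of 4-element subsets
  set 𝒮 : Finset (Finset (Fin n)) := Finset.univ.filter (fun S => S.card = 4) with h𝒮
  have hcard4 : ∀ S ∈ 𝒮, S.card = 4 := fun S hS => (Finset.mem_filter.mp hS).2
  have hSne : ∀ S ∈ 𝒮, S.Nonempty := fun S hS =>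
    Finset.card_pos.mp (by rw [hcard4 S hS]; norm_num)
  obtain ⟨S₄, -, hS₄card⟩ := Finset.exists_subset_card_eq (s := (Finset.univ : Finset (Fin n))) (n := 4)
      (by rw [Finset.card_univ, Fintype.card_fin]; exact hn)
  have hS₄ : S₄ ∈ 𝒮 := Finset.mem_filter.mpr ⟨Finset.mem_univ _, hS₄card⟩
  have hNpos : (0:ℝ) < (𝒮.card : ℝ) := by
    have := Finset.card_pos.mpr ⟨S₄, hS₄⟩
    exact_mod_cast this
  set c : ℝ := ((𝒮.card : ℝ))⁻¹ with hc
  have hcpos : 0 < c := inv_pos.mpr hNpos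
  have h2n : (0:ℝ) < (2:ℝ)^n := by positivity
  set μ : (Fin n → Bool) → ℝ := fun x => ((2:ℝ)^n)⁻¹ * (1 + c * ∑ S ∈ 𝒮, chi S x) with hμ
  have hchi_abs : ∀ (S : Finset (Fin n)) (x : Fin n → Bool), |chi S x| = 1 := by
    intro S x
    rw [chi, Finset.abs_prod]
    apply Finset.prod_eq_one
    intro i _
    cases x i <;> simp [sgn]
  -- inner bracket nonneg
  have hbracket : ∀ x, 0 ≤ 1 + c * ∑ S ∈ 𝒮, chi S x := by
    intro x
    have hlb : -(𝒮.card : ℝ) ≤ ∑ S ∈ 𝒮, chi S x := by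
      calc -(𝒮.card : ℝ) = ∑ _S ∈ 𝒮, (-1 : ℝ) := by
            rw [Finset.sum_const, nsmul_eq_mul]; ring
        _ ≤ ∑ S ∈ 𝒮, chi S x :=
            Finset.sum_le_sum fun S _ => (abs_le.mp (le_of_eq (hchi_abs S x))).1
    have := mul_le_mul_of_nonneg_left hlb (le_of_lt hcpos)
    have hcN : c * -(𝒮.card : ℝ) = -1 := by
      rw [hc]; field_simp
    nlinarith
  refine ⟨μ, ?_, ?_, ?_, ?_, ?_, ?_⟩
  -- nonnegativity
  · intro x
    exact mul_nonneg (by positivity) (hbracket x)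
  -- total mass one
  · have hsum1 : ∑ x : Fin n → Bool, (1:ℝ) = (2:ℝ)^n := by
      rw [Finset.sum_const, Finset.card_univ, nsmul_eq_mul, mul_one]
      norm_cast
      simp [Fintype.card_fun]
    calc ∑ x : Fin n → Bool, μ x
        = ((2:ℝ)^n)⁻¹ * ∑ x : Fin n → Bool, (1 + c * ∑ S ∈ 𝒮, chi S x) := by
          rw [Finset.mul_sum]
      _ = ((2:ℝ)^n)⁻¹ * ((∑ x : Fin n → Bool, (1:ℝ))
            + c * ∑ S ∈ 𝒮, ∑ x : Fin n → Bool, chi S x) := by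
          rw [Finset.sum_add_distrib, ← Finset.mul_sum, Finset.sum_comm]
      _ = 1 := by
          rw [hsum1, Finset.sum_congr rfl (fun S hS => sum_chi (hSne S hS))]
          simp
  -- exchangeability
  · intro σ x
    have : ∑ S ∈ 𝒮, chi S (x ∘ σ) = ∑ S ∈ 𝒮, chi S x := by
      rw [Finset.sum_congr rfl (fun S _ => chi_comp_perm σ S x)]
      apply Finset.sum_nbij' (i := fun S => S.image σ) (j := fun S => S.image σ.symm)
      · intro S hS
        refine Finset.mem_filter.mpr ⟨Finset.mem_univ _, ?_⟩
        rw [Finset.card_image_of_injective _ σ.injective]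
        exact hcard4 S hS
      · intro S hS
        refine Finset.mem_filter.mpr ⟨Finset.mem_univ _, ?_⟩
        rw [Finset.card_image_of_injective _ σ.symm.injective]
        exact hcard4 S hS
      · intro S _
        rw [Finset.image_image]
        simp
      · intro S _
        rw [Finset.image_image]
        simp
      · intro S _
        rfl
    rw [hμ]
    simp only [this]
  -- 0-1 symmetry
  · intro x
    have : ∑ S ∈ 𝒮, chi S (fun i => !(x i)) = ∑ S ∈ 𝒮, chi S x := by
      apply Finset.sum_congr rfl
      intro S hS
      rw [chi_flip, hcard4 S hS]
      norm_num
    rw [hμ]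
    simp only [this]
  -- nonnegative correlations
  · have hsplit : ∀ (A : Finset (Fin n)), A.card ≤ 2 →
        ∑ x : Fin n → Bool, ind A x * μ x = ((2:ℝ)^n)⁻¹ * 2^(n - A.card) := by
      intro A hA
      calc ∑ x : Fin n → Bool, ind A x * μ x
          = ((2:ℝ)^n)⁻¹ * ((∑ x : Fin n → Bool, ind A x)
              + c * ∑ S ∈ 𝒮, ∑ x : Fin n → Bool, ind A x * chi S x) := by
            have hx : ∀ x : Fin n → Bool, ind A x * μ x
                = ((2:ℝ)^n)⁻¹ * (ind A x + c * ∑ S ∈ 𝒮, ind A x * chi S x) := by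
              intro x
              show ind A x * (((2:ℝ)^n)⁻¹ * (1 + c * ∑ S ∈ 𝒮, chi S x)) = _
              rw [← Finset.mul_sum]
              ring
            rw [Finset.sum_congr rfl fun x _ => hx x, ← Finset.mul_sum]
            congr 1
            rw [Finset.sum_add_distrib]
            congr 1
            rw [← Finset.mul_sum, Finset.sum_comm]
        _ = ((2:ℝ)^n)⁻¹ * 2^(n - A.card) := by
            rw [Finset.sum_congr rfl (fun S hS => sum_ind_chi (fun hsub => by
              have := Finset.card_le_card hsub
              rw [hcard4 S hS] at this
              omega)), sum_ind]
            simp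
    have hone : ∀ i : Fin n, prEv μ {x | x i = true} = 1/2 := by
      intro i
      have h1 : prEv μ {x | x i = true} = ∑ x : Fin n → Bool, ind {i} x * μ x := by
        rw [prEv]
        apply Finset.sum_congr rfl
        intro x _
        by_cases h : x i = true <;> simp [ind, h]
      rw [h1, hsplit {i} (by simp)]
      rw [Finset.card_singleton]
      rw [show n = (n-1)+1 by omega]
      simp only [Nat.add_sub_cancel]
      rw [pow_succ]
      field_simp
    have htwo : ∀ i j : Fin n, i ≠ j → prEv μ {x | x i = true ∧ x j = true} = 1/4 := by
      intro i j hij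
      have h1 : prEv μ {x | x i = true ∧ x j = true}
          = ∑ x : Fin n → Bool, ind {i, j} x * μ x := by
        rw [prEv]
        apply Finset.sum_congr rfl
        intro x _
        have hpair : ind {i, j} x
            = (if x i = true then (1:ℝ) else 0) * (if x j = true then 1 else 0) := by
          rw [ind, Finset.prod_insert (by simp [hij]), Finset.prod_singleton]
        by_cases hx1 : x i = true <;> by_cases hx2 : x j = true <;>
          simp [hpair, hx1, hx2]
      rw [h1, hsplit {i, j} (by rw [Finset.card_pair hij]) ]
      rw [Finset.card_pair hij]
      rw [show n = (n-2)+2 by omega]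
      simp only [Nat.add_sub_cancel]
      rw [pow_add]
      field_simp
      ring
    intro i j hij
    rw [hone i, hone j, htwo i j hij]
    norm_num
  -- not a color process
  · rintro ν ⟨hν0, hν1⟩ hPhi
    have key : ∀ S : Finset (Fin n),
        ∑ π : Setoid (Fin n), ν π * ∑ x : Fin n → Bool, partW n (1/2) π x * chi S x
          = ∑ x : Fin n → Bool, μ x * chi S x := by
      intro S
      rw [← hPhi]
      calc ∑ π : Setoid (Fin n), ν π * ∑ x : Fin n → Bool, partW n (1/2) π x * chi S x
          = ∑ π : Setoid (Fin n), ∑ x : Fin n → Bool,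
              ν π * (partW n (1/2) π x * chi S x) := by
            apply Finset.sum_congr rfl
            intro π _
            rw [Finset.mul_sum]
        _ = ∑ x : Fin n → Bool, ∑ π : Setoid (Fin n),
              ν π * (partW n (1/2) π x * chi S x) := Finset.sum_comm
        _ = ∑ x : Fin n → Bool, Phi n (1/2) ν x * chi S x := by
            apply Finset.sum_congr rfl
            intro x _
            rw [Phi, Finset.sum_mul]
            apply Finset.sum_congr rfl
            intro π _
            ring
    have hmuhat : ∀ T : Finset (Fin n),
        ∑ x : Fin n → Bool, μ x * chi T x
          = ((2:ℝ)^n)⁻¹ * ((∑ x : Fin n → Bool, chi T x)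
              + c * ∑ S ∈ 𝒮, ∑ x : Fin n → Bool, chi S x * chi T x) := by
      intro T
      have hxterm : ∀ x : Fin n → Bool, μ x * chi T x
          = ((2:ℝ)^n)⁻¹ * (chi T x + c * ∑ S ∈ 𝒮, chi S x * chi T x) := by
        intro x
        show (((2:ℝ)^n)⁻¹ * (1 + c * ∑ S ∈ 𝒮, chi S x)) * chi T x = _
        rw [← Finset.sum_mul]
        ring
      rw [Finset.sum_congr rfl fun x _ => hxterm x, ← Finset.mul_sum]
      congr 1
      rw [Finset.sum_add_distrib]
      congr 1
      rw [← Finset.mul_sum, Finset.sum_comm]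
    have hpair0 : ∀ i j : Fin n, i ≠ j → ∑ x : Fin n → Bool, μ x * chi {i, j} x = 0 := by
      intro i j hij
      rw [hmuhat {i,j}, sum_chi ⟨i, Finset.mem_insert_self i {j}⟩]
      rw [Finset.sum_congr rfl (fun S hS => sum_chi_mul_chi (fun hST => by
        have hcS := hcard4 S hS
        rw [hST, Finset.card_pair hij] at hcS
        omega))]
      simp
    have hS40 : ∑ x : Fin n → Bool, μ x * chi S₄ x = c := by
      rw [hmuhat S₄, sum_chi (hSne S₄ hS₄)]
      rw [Finset.sum_eq_single_of_mem S₄ hS₄ (fun S _ hne => sum_chi_mul_chi hne), sum_chi_sq]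
      field_simp
      ring
    have hsupp : ∀ π : Setoid (Fin n), ν π ≠ 0 → ∀ i j : Fin n, i ≠ j → ¬ π.r i j := by
      intro π hπ i j hij hr
      have hsum0 : ∑ π : Setoid (Fin n),
          ν π * ∑ x : Fin n → Bool, partW n (1/2) π x * chi {i,j} x = 0 := by
        rw [key {i,j}, hpair0 i j hij]
      have hterm := (Finset.sum_eq_zero_iff_of_nonneg (fun π' _ =>
        mul_nonneg (hν0 π') (T_nonneg π' {i,j}))).mp hsum0 π (Finset.mem_univ π)
      rw [T_pair π hij hr, mul_one] at hterm
      exact hπ hterm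
    have hzero : ∑ π : Setoid (Fin n),
        ν π * ∑ x : Fin n → Bool, partW n (1/2) π x * chi S₄ x = 0 := by
      apply Finset.sum_eq_zero
      intro π _
      by_cases hπ : ν π = 0
      · rw [hπ, zero_mul]
      · rw [T_zero_of_no_rel π (hSne S₄ hS₄)
          (fun i _ j _ hij => hsupp π hπ i j hij), mul_zero]
    rw [key S₄, hS40] at hzero
    exact absurd hzero (ne_of_gt hcpos)
end

section
/- Let (Z_i)_{i≥1} be i.i.d. random variables with P(Z_i = 1) = P(Z_i = −1) = 1/2. There is no paint-box (p_i)_{i≥1} such that the random variable 1/2 + (1/2)·Σ_{i≥1} p_i Z_i has distribution (3/8)·δ_0 + (1/4)·δ_{1/2} + (3/8)·δ_1. -/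
open MeasureTheory ProbabilityTheory
open scoped ENNReal

/-- A paint-box: a nonincreasing sequence of nonnegative reals with total sum at most `1`. -/
def IsPaintbox (q : ℕ → ℝ) : Prop :=
  (∀ i, 0 ≤ q i) ∧ (∀ i, q (i + 1) ≤ q i) ∧ ∀ F : Finset ℕ, ∑ i ∈ F, q i ≤ 1

/-- Key estimate: if all `Z i ω ∈ {-1,1}` and `Z j ω = -1`, then the series is at most
`(∑' q) - 2 q j`. -/
lemma paintbox_tsum_le {q : ℕ → ℝ} (hq0 : ∀ i, 0 ≤ q i) (hqs : Summable q)
    (z : ℕ → ℝ) (hz : ∀ i, z i = -1 ∨ z i = 1) (j : ℕ) (hzj : z j = -1) :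
    ∑' i, q i * z i ≤ (∑' i, q i) - 2 * q j := by
  have hite : Summable (fun i => if i = j then 2 * q j else 0) :=
    (hasSum_ite_eq j (2 * q j)).summable
  have hsum1 : Summable (fun i => q i * z i) := by
    apply Summable.of_abs
    have : (fun i => |q i * z i|) = q := by
      funext i
      rcases hz i with h | h <;> simp [h, abs_mul, abs_of_nonneg (hq0 i)]
    rw [this]; exact hqs
  have hle : ∀ i, q i * z i ≤ q i - (if i = j then 2 * q j else 0) := by
    intro i
    by_cases hij : i = j
    · subst hij; rw [hzj]; rw [if_pos rfl]; linarith
    · simp only [hij, if_false, sub_zero]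
      rcases hz i with h | h
      · rw [h]; nlinarith [hq0 i]
      · rw [h]; simp
  calc ∑' i, q i * z i ≤ ∑' i, (q i - (if i = j then 2 * q j else 0)) :=
        Summable.tsum_le_tsum hle hsum1 (hqs.sub hite)
    _ = (∑' i, q i) - ∑' i, (if i = j then 2 * q j else 0) := Summable.tsum_sub hqs hite
    _ = (∑' i, q i) - 2 * q j := by rw [tsum_ite_eq]

/-- **(Steif–Tykesson, part of the proof of Theorem 3.13.)**
Let `(Z_i)` be i.i.d. with `P(Z_i = 1) = P(Z_i = -1) = 1/2`.  There is no paint-box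
`(q_i)` such that `1/2 + (1/2)·Σ q_i Z_i` has distribution
`(3/8)δ_0 + (1/4)δ_{1/2} + (3/8)δ_1`. -/
theorem no_paintbox_with_given_three_point_mixing_law
    {Ω : Type*} [MeasurableSpace Ω] (P : Measure Ω) [IsProbabilityMeasure P]
    (Z : ℕ → Ω → ℝ) (hZmeas : ∀ i, Measurable (Z i))
    (hindep : iIndepFun Z P)
    (hone : ∀ i, P (Z i ⁻¹' {1}) = 1/2)
    (hminusone : ∀ i, P (Z i ⁻¹' {-1}) = 1/2) :
    ¬ ∃ q : ℕ → ℝ, IsPaintbox q ∧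
        Measure.map (fun ω => 1/2 + (1/2) * ∑' i, q i * Z i ω) P =
          (3/8 : ℝ≥0∞) • Measure.dirac (0 : ℝ) + (1/4 : ℝ≥0∞) • Measure.dirac (1/2 : ℝ) +
            (3/8 : ℝ≥0∞) • Measure.dirac (1 : ℝ) := by
  rintro ⟨q, ⟨hq0, hqmono, hqF⟩, hmap⟩
  set W : Ω → ℝ := fun ω => 1/2 + (1/2) * ∑' i, q i * Z i ω with hWdef
  -- antitone
  have hanti : Antitone q := antitone_nat_of_succ_le hqmono
  have hqs : Summable q := summable_of_sum_le hq0 hqF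
  have hqtsum : (∑' i, q i) ≤ 1 := Summable.tsum_le_of_sum_le hqs hqF
  -- W is a.e. measurable, since otherwise the mapped measure is zero
  have hWmeas : AEMeasurable W P := by
    by_contra h
    rw [Measure.map_of_not_aemeasurable h] at hmap
    have := congrArg (fun μ : Measure ℝ => μ Set.univ) hmap
    simp [Measure.dirac_apply] at this
    rw [eq_comm, add_eq_zero, add_eq_zero] at this
    exact absurd this.1.1 (by simp [ENNReal.div_eq_zero_iff])
  -- evaluate the mapped measure on singletons
  have heval : ∀ x : ℝ, P (W ⁻¹' {x}) =
      (3/8 : ℝ≥0∞) * ({x} : Set ℝ).indicator 1 0 + (1/4 : ℝ≥0∞) * ({x} : Set ℝ).indicator 1 (1/2)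
        + (3/8 : ℝ≥0∞) * ({x} : Set ℝ).indicator 1 1 := by
    intro x
    rw [← Measure.map_apply_of_aemeasurable hWmeas (measurableSet_singleton x), hmap]
    simp [Measure.dirac_apply' _ (measurableSet_singleton x)]
  have h1 : P (W ⁻¹' {1}) = 3/8 := by
    rw [heval 1]
    norm_num [Set.indicator_apply]
  have hhalf : P (W ⁻¹' {1/2}) = 1/4 := by
    rw [heval (1/2)]
    norm_num [Set.indicator_apply]
  -- the almost sure event where all Z i take values in {-1,1}
  set A : Set Ω := ⋂ i, Z i ⁻¹' ({-1, 1} : Set ℝ) with hAdef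
  have hZi1 : ∀ i, P (Z i ⁻¹' ({-1, 1} : Set ℝ)) = 1 := by
    intro i
    have : Z i ⁻¹' ({-1, 1} : Set ℝ) = Z i ⁻¹' {-1} ∪ Z i ⁻¹' {1} := by
      rw [← Set.singleton_union, Set.preimage_union]
    rw [this, measure_union _ ((hZmeas i) (measurableSet_singleton 1)),
      hone i, hminusone i]
    · rw [one_div]; exact ENNReal.inv_two_add_inv_two
    · apply Set.disjoint_left.2
      intro ω h1 h2
      simp only [Set.mem_preimage, Set.mem_singleton_iff] at h1 h2
      norm_num [h1] at h2
  have hAc : P Aᶜ = 0 := by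
    rw [hAdef, Set.compl_iInter]
    refine measure_iUnion_null fun i => ?_
    have hm : MeasurableSet (Z i ⁻¹' ({-1, 1} : Set ℝ)) :=
      (hZmeas i) (by measurability)
    rw [measure_compl hm (measure_ne_top P _), hZi1 i, measure_univ, tsub_self]
  have hmemA : ∀ ω ∈ A, ∀ i, Z i ω = -1 ∨ Z i ω = 1 := by
    intro ω hω i
    have := Set.mem_iInter.1 hω i
    simpa [Set.mem_preimage] using this
  by_cases h0 : q 0 = 0
  · -- all q i = 0, so W ≡ 1/2 and P(W = 1) = 0 ≠ 3/8
    have hq_all : ∀ i, q i = 0 := fun i => le_antisymm (h0 ▸ hanti (Nat.zero_le i)) (hq0 i)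
    have : W ⁻¹' {1} = ∅ := by
      ext ω
      simp only [Set.mem_preimage, Set.mem_singleton_iff, Set.mem_empty_iff_false, iff_false]
      have : (∑' i, q i * Z i ω) = 0 := by
        simp [hq_all]
      rw [hWdef]
      simp [this]
    rw [this, measure_empty] at h1
    exact absurd h1.symm (by norm_num)
  · have hq0pos : 0 < q 0 := lt_of_le_of_ne (hq0 0) (Ne.symm h0)
    by_cases h1' : q 1 = 0
    · -- only q 0 positive: W = 1/2 + q0/2 * Z 0, so P(W = 1/2) = P(Z 0 = 0) = 0 ≠ 1/4
      have hq_tail : ∀ i, i ≠ 0 → q i = 0 := by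
        intro i hi
        have h1le : 1 ≤ i := Nat.one_le_iff_ne_zero.2 hi
        exact le_antisymm (h1' ▸ hanti h1le) (hq0 i)
      have hsub : W ⁻¹' {1/2} ⊆ Aᶜ := by
        intro ω hω
        simp only [Set.mem_preimage, Set.mem_singleton_iff] at hω
        have htsum : (∑' i, q i * Z i ω) = q 0 * Z 0 ω :=
          tsum_eq_single 0 (fun i hi => by rw [hq_tail i hi]; ring)
        rw [hWdef] at hω
        simp only [htsum] at hω
        have hz0 : Z 0 ω = 0 := by
          have : q 0 * Z 0 ω = 0 := by linarith
          rcases mul_eq_zero.1 this with h | h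
          · exact absurd h h0
          · exact h
        intro hA
        rcases hmemA ω hA 0 with h | h <;> rw [hz0] at h <;> norm_num at h
      have := (measure_mono hsub).trans_eq hAc
      rw [hhalf] at this
      have hz := le_antisymm this zero_le
      have := congrArg ENNReal.toReal hz
      simp [ENNReal.toReal_div] at this
    · -- q 0, q 1 > 0 : the event {W = 1} forces Z 0 = Z 1 = 1
      have hq1pos : 0 < q 1 := lt_of_le_of_ne (hq0 1) (Ne.symm h1')
      have hsub : W ⁻¹' {1} ⊆ (Z 0 ⁻¹' {1} ∩ Z 1 ⁻¹' {1}) ∪ Aᶜ := by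
        intro ω hω
        simp only [Set.mem_preimage, Set.mem_singleton_iff] at hω
        by_cases hA : ω ∈ A
        · left
          have hz := hmemA ω hA
          have hS : (∑' i, q i * Z i ω) = 1 := by
            rw [hWdef] at hω; simp only at hω; linarith
          constructor
          · simp only [Set.mem_preimage, Set.mem_singleton_iff]
            rcases hz 0 with h | h
            · exfalso
              have := paintbox_tsum_le hq0 hqs (fun i => Z i ω) hz 0 h
              rw [hS] at this
              linarith
            · exact h
          · simp only [Set.mem_preimage, Set.mem_singleton_iff]
            rcases hz 1 with h | h
            · exfalso
              have := paintbox_tsum_le hq0 hqs (fun i => Z i ω) hz 1 h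
              rw [hS] at this
              linarith
            · exact h
        · right; exact hA
      have hindep01 : P (Z 0 ⁻¹' {1} ∩ Z 1 ⁻¹' {1}) = 1/4 := by
        rw [(hindep.indepFun (show (0 : ℕ) ≠ 1 by decide)).measure_inter_preimage_eq_mul
          _ _ (measurableSet_singleton 1) (measurableSet_singleton 1), hone 0, hone 1]
        rw [show ((1:ℝ≥0∞)/2) * (1/2) = 1/4 by
          have h22 : ((2:ℝ≥0∞) * 2)⁻¹ = 2⁻¹ * 2⁻¹ := ENNReal.mul_inv (by norm_num) (by norm_num)
          simp only [one_div]
          rw [← h22]; norm_num]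
      have hle : P (W ⁻¹' {1}) ≤ 1/4 := by
        calc P (W ⁻¹' {1}) ≤ P ((Z 0 ⁻¹' {1} ∩ Z 1 ⁻¹' {1}) ∪ Aᶜ) := measure_mono hsub
          _ ≤ P (Z 0 ⁻¹' {1} ∩ Z 1 ⁻¹' {1}) + P Aᶜ := measure_union_le _ _
          _ = 1/4 := by rw [hindep01, hAc, add_zero]
      rw [h1] at hle
      have := ENNReal.toReal_mono (by norm_num) hle
      simp [ENNReal.toReal_div] at this
      norm_num at this
end

section
/- Let d ≥ 1, let ν be a stationary RER on ℤ^d, and for a partition π let C_n(π) be the number of blocks of π intersecting B_n = [−n,n]^d ∩ ℤ^d. If p, α ∈ (0,1) are such that Π_α ≼ Φ_p(ν), then for all n ≥ 0 and all k ≥ 1: ν({π : C_n(π) ≤ k}) ≤ (1−α)^{(2n+1)^d} / (1−p)^k. -/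
open MeasureTheory
open scoped Classical BigOperators ENNReal

/-- The σ-algebra on the space of partitions of `V` (identified with equivalence relations,
i.e. setoids, on `V`) generated by the events "`v` and `w` lie in the same block". -/
instance setoidMeasurableSpace (V : Type*) : MeasurableSpace (Setoid V) :=
  MeasurableSpace.generateFrom {A | ∃ v w : V, A = {π : Setoid V | π.r v w}}

/-- The probability that the color process of the deterministic partition `π`, with
parameter `p`, agrees with `b` on the finite set `F`: the product over the blocks of the
partition induced by `π` on `F` of `p·1[b ≡ 1 on B] + (1-p)·1[b ≡ 0 on B]`. -/
noncomputable def cylW {V : Type*} (p : ℝ) (F : Finset V) (π : Setoid V) (b : V → Bool) : ℝ :=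
  ∏ᶠ B ∈ {S : Set V | ∃ v ∈ F, S = {w | w ∈ F ∧ π.r v w}},
    ((if ∀ i ∈ B, b i = true then p else 0) + (if ∀ i ∈ B, b i = false then 1 - p else 0))

/-- The cylinder event "the configuration agrees with `b` on `F`". -/
def cylEvent {V : Type*} (F : Finset V) (b : V → Bool) : Set (V → Bool) :=
  {x | ∀ v ∈ F, x v = b v}

/-- `μ` is the color process `Φ_p(ν)` of the random equivalence relation `ν`, characterized
through its finite-dimensional distributions. -/
def IsColorProcess {V : Type*} (p : ℝ) (ν : Measure (Setoid V)) (μ : Measure (V → Bool)) :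
    Prop :=
  IsProbabilityMeasure μ ∧
    ∀ (F : Finset V) (b : V → Bool),
      μ (cylEvent F b) = ENNReal.ofReal (∫ π, cylW p F π b ∂ν)

/-- `μ` is the Bernoulli(α) product measure `Π_α` on `{0,1}^V`, characterized through its
finite-dimensional distributions. -/
def IsBernoulliProduct {V : Type*} (α : ℝ) (μ : Measure (V → Bool)) : Prop :=
  IsProbabilityMeasure μ ∧
    ∀ (F : Finset V) (b : V → Bool),
      μ (cylEvent F b) = ∏ v ∈ F, ENNReal.ofReal (if b v then α else 1 - α)

/-- Stochastic domination `μ₁ ≼ μ₂`: some coupling of `μ₁` and `μ₂` is concentrated on the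
set of coordinatewise ordered pairs of configurations. -/
def StochDom {V : Type*} (μ₁ μ₂ : Measure (V → Bool)) : Prop :=
  ∃ κ : Measure ((V → Bool) × (V → Bool)),
    κ.map Prod.fst = μ₁ ∧ κ.map Prod.snd = μ₂ ∧
      κ {q | ∀ v, q.1 v = true → q.2 v = true}ᶜ = 0

/-- The vertex set `ℤ^d`. -/
abbrev Vd (d : ℕ) := Fin d → ℤ

/-- The translation of a partition of `ℤ^d` by `x`. -/
def shiftSetoid {d : ℕ} (x : Vd d) (π : Setoid (Vd d)) : Setoid (Vd d) where
  r a b := π.r (a - x) (b - x)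
  iseqv := ⟨fun _ => π.iseqv.refl _, fun h => π.iseqv.symm h, fun h h' => π.iseqv.trans h h'⟩

/-- The translation of a configuration `ω ∈ {0,1}^{ℤ^d}` by `x`: `(T^x ω)(y) = ω(y - x)`. -/
def shiftCfg {d : ℕ} (x : Vd d) (ω : Vd d → Bool) : Vd d → Bool := fun y => ω (y - x)

/-- An RER on `ℤ^d` is stationary if it is invariant under all translations. -/
def StationaryRER {d : ℕ} (ν : Measure (Setoid (Vd d))) : Prop :=
  ∀ x : Vd d, Measure.map (shiftSetoid x) ν = ν

/-- The box `B_n = [-n,n]^d ∩ ℤ^d`. -/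
def box (d n : ℕ) : Set (Vd d) := {v | ∀ i, |v i| ≤ (n : ℤ)}

/-- The number of blocks of `π` intersecting the box `B_n`. -/
noncomputable def numClustersBox {d : ℕ} (n : ℕ) (π : Setoid (Vd d)) : ℕ :=
  {B ∈ π.classes | (B ∩ box d n).Nonempty}.ncard

section Helpers
variable {V : Type*}

/-- The finset of traces of blocks of `π` on `F`. -/
noncomputable def traceFinset (F : Finset V) (π : Setoid V) : Finset (Set V) :=
  F.image (fun v => {w | w ∈ F ∧ π.r v w})

lemma traceSet_eq (F : Finset V) (π : Setoid V) :
    {S : Set V | ∃ v ∈ F, S = {w | w ∈ F ∧ π.r v w}} = ↑(traceFinset F π) := by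
  ext S
  simp [traceFinset, eq_comm]

lemma cylW_false (p : ℝ) (F : Finset V) (π : Setoid V) :
    cylW p F π (fun _ => false) = (1 - p) ^ (traceFinset F π).card := by
  rw [cylW, traceSet_eq, finprod_mem_coe_finset]
  rw [Finset.prod_congr rfl (fun B hB => ?_), Finset.prod_const]
  obtain ⟨v, hv, rfl⟩ := Finset.mem_image.mp hB
  have hvB : v ∈ {w | w ∈ F ∧ π.r v w} := ⟨hv, π.iseqv.refl v⟩
  rw [if_neg, if_pos, zero_add]
  · intro i _; rfl
  · intro h
    exact Bool.false_ne_true (h v hvB)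

lemma ncard_clusters (F : Finset V) (π : Setoid V) :
    {B ∈ π.classes | (B ∩ ↑F).Nonempty}.ncard = (traceFinset F π).card := by
  set s : Set (Set V) := {B ∈ π.classes | (B ∩ ↑F).Nonempty}
  have hinj : Set.InjOn (fun B => B ∩ (↑F : Set V)) s := by
    rintro B1 ⟨hB1, hne1⟩ B2 ⟨hB2, _⟩ h
    obtain ⟨z, hz1, hzF⟩ := hne1
    have h' : B1 ∩ ↑F = B2 ∩ ↑F := h
    have hz2 : z ∈ B2 := by
      have : z ∈ B2 ∩ ↑F := by rw [← h']; exact ⟨hz1, hzF⟩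
      exact this.1
    exact Setoid.eq_of_mem_classes hB1 hz1 hB2 hz2
  have himg : (fun B => B ∩ (↑F : Set V)) '' s = ↑(traceFinset F π) := by
    ext S
    constructor
    · rintro ⟨B, ⟨⟨y, rfl⟩, hne⟩, rfl⟩
      obtain ⟨z, hzB, hzF⟩ := hne
      have : {x | π.r x y} ∩ ↑F = {w | w ∈ F ∧ π.r z w} := by
        ext w
        constructor
        · rintro ⟨hw, hwF⟩
          exact ⟨hwF, π.iseqv.trans hzB (π.iseqv.symm hw)⟩
        · rintro ⟨hwF, hw⟩
          exact ⟨π.iseqv.trans (π.iseqv.symm hw) hzB, hwF⟩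
      show {x | π.r x y} ∩ ↑F ∈ _
      rw [this]
      exact Finset.mem_coe.mpr (Finset.mem_image.mpr ⟨z, hzF, rfl⟩)
    · intro hS
      obtain ⟨v, hvF, rfl⟩ := Finset.mem_image.mp (Finset.mem_coe.mp hS)
      refine ⟨{x | π.r x v}, ⟨⟨v, rfl⟩, ⟨v, π.iseqv.refl v, hvF⟩⟩, ?_⟩
      ext w
      constructor
      · rintro ⟨hw, hwF⟩; exact ⟨hwF, π.iseqv.symm hw⟩
      · rintro ⟨hwF, hw⟩; exact ⟨π.iseqv.symm hw, hwF⟩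
  calc s.ncard = ((fun B => B ∩ (↑F : Set V)) '' s).ncard :=
        (Set.ncard_image_of_injOn hinj).symm
    _ = (↑(traceFinset F π) : Set (Set V)).ncard := by rw [himg]
    _ = (traceFinset F π).card := Set.ncard_coe_finset _

lemma measurable_rel (v w : V) : MeasurableSet {π : Setoid V | π.r v w} :=
  MeasurableSpace.measurableSet_generateFrom ⟨v, w, rfl⟩

lemma measurable_traceCard (F : Finset V) :
    Measurable (fun π : Setoid V => (traceFinset F π).card) := by
  classical
  set G : ((↥F × ↥F) → Bool) → ℕ := fun m =>
    ((Finset.univ : Finset ↥F).image (fun v => Finset.univ.filter (fun w => m (v, w)))).card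
  have key : ∀ π : Setoid V,
      (traceFinset F π).card = G (fun q => decide (π.r q.1.1 q.2.1)) := by
    intro π
    apply Finset.card_bij (fun S _ => Finset.univ.filter (fun w : ↥F => (w : V) ∈ S))
    · intro S hS
      obtain ⟨v, hvF, rfl⟩ := Finset.mem_image.mp hS
      refine Finset.mem_image.mpr ⟨⟨v, hvF⟩, Finset.mem_univ _, ?_⟩
      ext w
      simp [w.2]
    · intro S1 hS1 S2 hS2 h
      obtain ⟨v1, hv1, rfl⟩ := Finset.mem_image.mp hS1
      obtain ⟨v2, hv2, rfl⟩ := Finset.mem_image.mp hS2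
      have h' : ∀ u : ↥F, ((u : V) ∈ F ∧ π.r v1 (u : V)) ↔ ((u : V) ∈ F ∧ π.r v2 (u : V)) := by
        intro u
        have := Finset.ext_iff.mp h u
        simpa using this
      ext w
      constructor
      · rintro ⟨hwF, hw⟩
        exact ⟨hwF, ((h' ⟨w, hwF⟩).mp ⟨hwF, hw⟩).2⟩
      · rintro ⟨hwF, hw⟩
        exact ⟨hwF, ((h' ⟨w, hwF⟩).mpr ⟨hwF, hw⟩).2⟩
    · intro t ht
      obtain ⟨v, _, rfl⟩ := Finset.mem_image.mp ht
      refine ⟨{w | w ∈ F ∧ π.r (v : V) w}, Finset.mem_image.mpr ⟨v, v.2, rfl⟩, ?_⟩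
      ext w
      simp [w.2]
  have hM : Measurable (fun π : Setoid V => (fun q : ↥F × ↥F => decide (π.r q.1.1 q.2.1))) := by
    apply measurable_pi_lambda
    intro q
    apply measurable_to_countable'
    intro x
    cases x with
    | true =>
      have : (fun π : Setoid V => decide (π.r q.1.1 q.2.1)) ⁻¹' {true}
          = {π : Setoid V | π.r q.1.1 q.2.1} := by
        ext π; simp
      rw [this]; exact measurable_rel _ _
    | false =>
      have : (fun π : Setoid V => decide (π.r q.1.1 q.2.1)) ⁻¹' {false}
          = {π : Setoid V | π.r q.1.1 q.2.1}ᶜ := by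
        ext π; simp
      rw [this]; exact (measurable_rel _ _).compl
  have : (fun π : Setoid V => (traceFinset F π).card)
      = G ∘ (fun π : Setoid V => (fun q : ↥F × ↥F => decide (π.r q.1.1 q.2.1))) := by
    funext π; exact key π
  rw [this]
  exact (measurable_of_countable G).comp hM

end Helpers

/-- **Proposition (Steif–Tykesson, Proposition 5.4(i)).**
Let `d ≥ 1`, let `ν` be a stationary RER on `ℤ^d`, and let `C_n(π)` be the number of blocks
of `π` intersecting `B_n = [-n,n]^d`.  If `p, α ∈ (0,1)` are such that `Π_α ≼ Φ_p(ν)`, then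
for all `n ≥ 0` and `k ≥ 1`:
`ν(C_n ≤ k) ≤ (1-α)^{(2n+1)^d} / (1-p)^k`. -/
theorem cluster_count_bound_of_domination
    (d : ℕ) (hd : 1 ≤ d) (ν : Measure (Setoid (Vd d))) [IsProbabilityMeasure ν]
    (hstat : StationaryRER ν) (p α : ℝ) (hp : p ∈ Set.Ioo (0:ℝ) 1) (hα : α ∈ Set.Ioo (0:ℝ) 1)
    (hdom : ∃ μα μ : Measure (Vd d → Bool),
      IsBernoulliProduct α μα ∧ IsColorProcess p ν μ ∧ StochDom μα μ)
    (n k : ℕ) (hk : 1 ≤ k) :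
    ν {π : Setoid (Vd d) | numClustersBox n π ≤ k} ≤
      ENNReal.ofReal ((1 - α) ^ ((2 * n + 1) ^ d) / (1 - p) ^ k) := by
  obtain ⟨μα, μ, ⟨hμαP, hμα⟩, ⟨hμP, hμ⟩, κ, hκf, hκs, hκN⟩ := hdom
  have hp1 : (0:ℝ) < 1 - p := by linarith [hp.2]
  have hp1' : 1 - p ≤ 1 := by linarith [hp.1]
  have hα1 : (0:ℝ) ≤ 1 - α := by linarith [hα.2]
  set F : Finset (Vd d) := Fintype.piFinset fun _ : Fin d => Finset.Icc (-(n:ℤ)) (n:ℤ) with hF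
  have hFbox : box d n = ↑F := by
    ext v
    simp only [box, hF, Finset.coe_sort_coe, Finset.mem_coe, Fintype.mem_piFinset,
      Finset.mem_Icc, Set.mem_setOf_eq, abs_le]
  have hFcard : F.card = (2 * n + 1) ^ d := by
    rw [hF, Fintype.card_piFinset]
    have : (Finset.Icc (-(n:ℤ)) (n:ℤ)).card = 2 * n + 1 := by
      rw [Int.card_Icc]; omega
    simp [this]
  have hnum : ∀ π : Setoid (Vd d), numClustersBox n π = (traceFinset F π).card := by
    intro π
    rw [numClustersBox, hFbox]
    exact ncard_clusters F π
  set A : Set (Setoid (Vd d)) := {π | numClustersBox n π ≤ k} with hAdef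
  have hA : MeasurableSet A := by
    have : A = (fun π : Setoid (Vd d) => (traceFinset F π).card) ⁻¹' (Set.Iic k) := by
      ext π; simp [hAdef, hnum π]
    rw [this]
    exact measurable_traceCard F (by trivial)
  set E : Set (Vd d → Bool) := cylEvent F (fun _ => false) with hEdef
  have hE : MeasurableSet E := by
    have : E = ⋂ v ∈ F, (fun x : Vd d → Bool => x v) ⁻¹' {false} := by
      ext x; simp [hEdef, cylEvent]
    rw [this]
    exact MeasurableSet.biInter F.countable_toSet
      (fun v _ => measurable_pi_apply v (measurableSet_singleton false))
  -- domination step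
  have h2 : μ E ≤ μα E := by
    rw [← hκs, ← hκf, Measure.map_apply measurable_snd hE, Measure.map_apply measurable_fst hE]
    set N : Set ((Vd d → Bool) × (Vd d → Bool)) := {q | ∀ v, q.1 v = true → q.2 v = true}
    have hsub : (Prod.snd ⁻¹' E) ∩ N ⊆ Prod.fst ⁻¹' E := by
      rintro q ⟨hq2, hqN⟩ v hv
      cases hq1 : q.1 v with
      | false => rfl
      | true => exact absurd (hq2 v hv) (by rw [hqN v hq1]; exact Bool.noConfusion)
    calc κ (Prod.snd ⁻¹' E) ≤ κ ((Prod.snd ⁻¹' E) ∩ N) + κ ((Prod.snd ⁻¹' E) \ N) :=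
          measure_le_inter_add_diff _ _ _
      _ ≤ κ (Prod.fst ⁻¹' E) + κ Nᶜ :=
          add_le_add (measure_mono hsub) (measure_mono (Set.diff_subset_compl _ _))
      _ = κ (Prod.fst ⁻¹' E) := by rw [hκN, add_zero]
  -- Bernoulli value
  have h3 : μα E = ENNReal.ofReal ((1 - α) ^ ((2 * n + 1) ^ d)) := by
    rw [hEdef, hμα F (fun _ => false)]
    simp only [Bool.false_eq_true, if_false]
    rw [Finset.prod_const, hFcard, ← ENNReal.ofReal_pow hα1]
  -- color-process lower bound
  have h1 : ENNReal.ofReal ((1 - p) ^ k) * ν A ≤ μ E := by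
    rw [hEdef, hμ F (fun _ => false)]
    have hmeasg : Measurable (fun π : Setoid (Vd d) => (1 - p) ^ (traceFinset F π).card) :=
      (measurable_from_top (f := fun m : ℕ => (1 - p) ^ m)).comp (measurable_traceCard F)
    have hgint : Integrable (fun π : Setoid (Vd d) => (1 - p) ^ (traceFinset F π).card) ν := by
      refine Integrable.mono' (integrable_const 1) hmeasg.aestronglyMeasurable ?_
      filter_upwards with π
      rw [Real.norm_eq_abs, abs_of_nonneg (pow_nonneg hp1.le _)]
      exact pow_le_one₀ hp1.le hp1'
    have hle : ∫ π, A.indicator (fun _ => (1 - p) ^ k) π ∂ν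
        ≤ ∫ π, cylW p F π (fun _ => false) ∂ν := by
      have hcyl : (fun π : Setoid (Vd d) => cylW p F π (fun _ => false))
          = fun π => (1 - p) ^ (traceFinset F π).card := by
        funext π; exact cylW_false p F π
      rw [hcyl]
      refine integral_mono_of_nonneg ?_ hgint ?_
      · filter_upwards with π
        exact Set.indicator_nonneg (fun _ _ => pow_nonneg hp1.le _) π
      · filter_upwards with π
        by_cases hπ : π ∈ A
        · rw [Set.indicator_of_mem hπ]
          have hπk : (traceFinset F π).card ≤ k := by
            have := hπ; rw [hAdef] at this
            simpa [hnum π] using this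
          exact pow_le_pow_of_le_one hp1.le hp1' hπk
        · rw [Set.indicator_of_notMem hπ]
          exact pow_nonneg hp1.le _
    have hind : ∫ π, A.indicator (fun _ => (1 - p) ^ k) π ∂ν = (ν A).toReal * (1 - p) ^ k := by
      rw [integral_indicator_const _ hA, smul_eq_mul]; rfl
    calc ENNReal.ofReal ((1 - p) ^ k) * ν A
        = ENNReal.ofReal ((ν A).toReal * (1 - p) ^ k) := by
          rw [ENNReal.ofReal_mul ENNReal.toReal_nonneg, ENNReal.ofReal_toReal (measure_ne_top ν A),
            mul_comm]
      _ = ENNReal.ofReal (∫ π, A.indicator (fun _ => (1 - p) ^ k) π ∂ν) := by rw [hind]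
      _ ≤ ENNReal.ofReal (∫ π, cylW p F π (fun _ => false) ∂ν) := ENNReal.ofReal_le_ofReal hle
  -- combine
  have hpk : (0:ℝ) < (1 - p) ^ k := pow_pos hp1 k
  have hmain : ENNReal.ofReal ((1 - p) ^ k) * ν A ≤
      ENNReal.ofReal ((1 - α) ^ ((2 * n + 1) ^ d)) := (h1.trans h2).trans h3.le
  rw [ENNReal.ofReal_div_of_pos hpk]
  rw [ENNReal.le_div_iff_mul_le (Or.inl (by simp [hpk])) (Or.inl ENNReal.ofReal_ne_top)]
  rwa [mul_comm]
end

section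
/- Let d ≥ 1 and let ν be a stationary RER on ℤ^d such that ν-almost surely every block of the partition is a connected subset of the nearest-neighbor lattice ℤ^d. If p, α ∈ (0,1) are such that Π_α ≼ Φ_p(ν), then for all n ≥ 1: ν({π : |π(0)| ≥ n}) ≤ (7^d (1−α))^n / (1−p), where π(0) is the block containing the origin. Consequently, if there are C > 0 and γ ∈ (0,1] with ν(|π(0)| ≥ n) ≥ C γ^n for infinitely many n, then for every p ∈ (0,1), sup{α : Π_α ≼ Φ_p(ν)} ≤ 1 − γ/7^d. -/
open MeasureTheory
open scoped Classical BigOperators ENNReal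

/-- Nearest-neighbor adjacency in `ℤ^d`: `a` and `b` are at `ℓ¹`-distance `1`. -/
def latAdj {d : ℕ} (a b : Vd d) : Prop := (∑ i, (a i - b i).natAbs) = 1

/-- A subset of `ℤ^d` is connected (for the nearest-neighbor graph structure). -/
def LatConnected {d : ℕ} (B : Set (Vd d)) : Prop :=
  ∀ a ∈ B, ∀ b ∈ B, ∃ (m : ℕ) (f : ℕ → Vd d), f 0 = a ∧ f m = b ∧
    (∀ k ≤ m, f k ∈ B) ∧ ∀ k < m, latAdj (f k) (f (k + 1))

/-- The event that the block of the origin has at least `n` elements (in particular, any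
infinite block qualifies). -/
def bigBlockEvent (d n : ℕ) : Set (Setoid (Vd d)) :=
  {π | ({w : Vd d | π.r 0 w}).Finite → n ≤ ({w : Vd d | π.r 0 w}).ncard}

namespace STgraph
variable {d : ℕ}

def IsWalk (S : Set (Vd d)) (a b : Vd d) (m : ℕ) (f : ℕ → Vd d) : Prop :=
  f 0 = a ∧ f m = b ∧ (∀ k ≤ m, f k ∈ S) ∧ ∀ k < m, latAdj (f k) (f (k + 1))

lemma latConnected_iff {S : Set (Vd d)} :
    LatConnected S ↔ ∀ a ∈ S, ∀ b ∈ S, ∃ m f, IsWalk S a b m f := Iff.rfl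

lemma latAdj_symm {a b : Vd d} (h : latAdj a b) : latAdj b a := by
  unfold latAdj at *
  rw [← h]
  exact Finset.sum_congr rfl fun i _ => by
    rw [← Int.natAbs_neg (b i - a i)]; ring_nf

lemma IsWalk.mono {S T : Set (Vd d)} (hST : S ⊆ T) {a b m f} (h : IsWalk S a b m f) :
    IsWalk T a b m f :=
  ⟨h.1, h.2.1, fun k hk => hST (h.2.2.1 k hk), h.2.2.2⟩

lemma IsWalk.refl {S : Set (Vd d)} {a : Vd d} (ha : a ∈ S) : IsWalk S a a 0 (fun _ => a) :=
  ⟨rfl, rfl, fun _ _ => ha, fun k hk => absurd hk (Nat.not_lt_zero k)⟩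

lemma IsWalk.reverse {S : Set (Vd d)} {a b m f} (h : IsWalk S a b m f) :
    IsWalk S b a m (fun k => f (m - k)) := by
  obtain ⟨h0, hm, hmem, hadj⟩ := h
  refine ⟨by simpa using hm, by simpa using h0, fun k _ => hmem _ (Nat.sub_le _ _), ?_⟩
  intro k hk
  have h1 : m - k = (m - (k+1)) + 1 := by omega
  have := hadj (m - (k+1)) (by omega)
  show latAdj (f (m - k)) (f (m - (k+1)))
  rw [h1]
  exact latAdj_symm this

lemma IsWalk.concat {S : Set (Vd d)} {a b c m m' f g} (h : IsWalk S a b m f)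
    (h' : IsWalk S b c m' g) :
    IsWalk S a c (m + m') (fun k => if k < m then f k else g (k - m)) := by
  obtain ⟨h0, hm, hmem, hadj⟩ := h
  obtain ⟨g0, gm, gmem, gadj⟩ := h'
  refine ⟨?_, ?_, ?_, ?_⟩
  · by_cases hm0 : 0 < m
    · simpa [hm0] using h0
    · have : m = 0 := by omega
      simp [this, g0, ← hm, this, h0]
  · have : ¬ (m + m' < m) := by omega
    simp [this, gm]
  · intro k hk
    by_cases hkm : k < m
    · simpa [hkm] using hmem k (le_of_lt hkm)
    · simpa [hkm] using gmem (k - m) (by omega)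
  · intro k hk
    by_cases hkm : k + 1 < m
    · have hk' : k < m := by omega
      simpa [hkm, hk'] using hadj k (by omega)
    · by_cases hkm2 : k < m
      · -- k + 1 = m
        have hk1 : k + 1 = m := by omega
        have : g (k + 1 - m) = f m := by
          rw [hk1]; simp [gm, ← gm]; simp [Nat.sub_self, g0, ← hm]
        show latAdj (if k < m then f k else g (k - m)) (if k + 1 < m then f (k+1) else g (k + 1 - m))
        rw [if_pos hkm2, if_neg hkm, this]
        have := hadj k (by omega)
        rwa [hk1] at this
      · have h1 : ¬ (k + 1 < m) := by omega
        have h2 : k + 1 - m = (k - m) + 1 := by omega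
        show latAdj (if k < m then f k else g (k - m)) (if k + 1 < m then f (k+1) else g (k + 1 - m))
        rw [if_neg hkm2, if_neg h1, h2]
        exact gadj (k - m) (by omega)

lemma connected_of_hub {S : Set (Vd d)} {u : Vd d} (hu : u ∈ S)
    (h : ∀ c ∈ S, ∃ m f, IsWalk S u c m f) : LatConnected S := by
  intro a ha b hb
  obtain ⟨m1, f1, hw1⟩ := h a ha
  obtain ⟨m2, f2, hw2⟩ := h b hb
  exact ⟨m1 + m2, fun k => if k < m1 then f1 (m1 - k) else f2 (k - m1), hw1.reverse.concat hw2⟩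

lemma latConnected_insert {S : Finset (Vd d)} (hS : LatConnected (S : Set (Vd d))) {u : Vd d}
    (hu : u ∈ S) {w : Vd d} (hadj : latAdj u w) :
    LatConnected ((insert w S : Finset (Vd d)) : Set (Vd d)) := by
  have hsub : (↑S : Set (Vd d)) ⊆ ((insert w S : Finset (Vd d)) : Set (Vd d)) := by
    intro x hx; simp only [Finset.coe_insert, Set.mem_insert_iff]; right; exact hx
  have hu' : u ∈ ((insert w S : Finset (Vd d)) : Set (Vd d)) := hsub (by exact_mod_cast hu)
  apply connected_of_hub hu'
  intro c hc
  rcases Finset.mem_insert.1 (by exact_mod_cast hc) with hcw | hcS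
  · subst hcw
    refine ⟨1, fun k => if k = 0 then u else c, ?_, ?_, ?_, ?_⟩
    · simp
    · simp
    · intro k hk
      by_cases h0 : k = 0
      · simpa [h0] using hu'
      · simp only [h0, if_neg, not_false_iff]
        simp [Finset.coe_insert]
    · intro k hk
      have : k = 0 := by omega
      simpa [this] using hadj
  · obtain ⟨m, f, hw⟩ := hS u (by exact_mod_cast hu) c (by exact_mod_cast hcS)
    exact ⟨m, f, IsWalk.mono hsub hw⟩

end STgraph

namespace STgraph
variable {d : ℕ}

lemma exists_noncut (S : Finset (Vd d)) (hS : LatConnected (S : Set (Vd d))) {a : Vd d}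
    (ha : a ∈ S) (h2 : 2 ≤ S.card) :
    ∃ v ∈ S, v ≠ a ∧ LatConnected ((S.erase v : Finset (Vd d)) : Set (Vd d)) ∧
      ∃ u ∈ S.erase v, latAdj u v := by
  have hex : ∀ b ∈ S, ∃ m, ∃ f, IsWalk (S : Set (Vd d)) a b m f := by
    intro b hb
    obtain ⟨m, f, hw⟩ := hS a (by exact_mod_cast ha) b (by exact_mod_cast hb)
    exact ⟨m, f, hw⟩
  classical
  let D : Vd d → ℕ := fun b => if hb : b ∈ S then Nat.find (hex b hb) else 0
  have hDspec : ∀ b (hb : b ∈ S), ∃ f, IsWalk (S : Set (Vd d)) a b (D b) f := by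
    intro b hb
    have := Nat.find_spec (hex b hb)
    simpa [D, dif_pos hb] using this
  have hDmin : ∀ b (hb : b ∈ S) (k : ℕ), (∃ f, IsWalk (S : Set (Vd d)) a b k f) → D b ≤ k := by
    intro b hb k hk
    simpa [D, dif_pos hb] using Nat.find_min' (hex b hb) hk
  obtain ⟨v, hv, hvmax⟩ := S.exists_max_image D ⟨a, ha⟩
  -- D a = 0, and some b ≠ a has D b ≥ 1
  have hDa : D a = 0 := Nat.le_zero.1 (hDmin a ha 0 ⟨fun _ => a, IsWalk.refl (by exact_mod_cast ha)⟩)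
  obtain ⟨b, hb, hba⟩ := Finset.exists_mem_ne (show 1 < S.card by omega) a
  have hDb : 1 ≤ D b := by
    by_contra h
    obtain ⟨f, hf⟩ := hDspec b hb
    have h0 : D b = 0 := by omega
    rw [h0] at hf
    exact hba (hf.2.1 ▸ hf.1 ▸ rfl)
  have hDv : 1 ≤ D v := le_trans hDb (hvmax b hb)
  have hva : v ≠ a := fun h => by rw [h, hDa] at hDv; omega
  -- walks avoiding v
  have havoid : ∀ b' (_ : b' ∈ S) (_ : b' ≠ v),
      ∃ f, IsWalk ((S.erase v : Finset (Vd d)) : Set (Vd d)) a b' (D b') f := by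
    intro b' hb' hb'v
    obtain ⟨f, hf0, hfm, hfmem, hfadj⟩ := hDspec b' hb'
    have hnv : ∀ k ≤ D b', f k ≠ v := by
      intro k hk hkv
      have hpre : ∃ g, IsWalk (S : Set (Vd d)) a v k g :=
        ⟨f, hf0, hkv, fun j hj => hfmem j (le_trans hj hk), fun j hj => hfadj j (by omega)⟩
      have hDvk : D v ≤ k := hDmin v hv k hpre
      rcases Nat.lt_or_ge k (D b') with hlt | hge
      · have := hvmax b' hb'
        omega
      · have hkeq : k = D b' := by omega
        exact hb'v (by rw [← hfm, ← hkeq, hkv])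
    refine ⟨f, hf0, hfm, ?_, hfadj⟩
    intro k hk
    have h1 : f k ∈ S := hfmem k hk
    have h2 : f k ≠ v := hnv k hk
    simp only [Finset.coe_erase, Set.mem_diff, Set.mem_singleton_iff]
    exact ⟨by exact_mod_cast h1, h2⟩
  have haerase : a ∈ S.erase v := Finset.mem_erase.2 ⟨fun h => hva h.symm, ha⟩
  refine ⟨v, hv, hva, ?_, ?_⟩
  · apply connected_of_hub (u := a) (by exact_mod_cast haerase)
    intro c hc
    have hc' : c ∈ S.erase v := by exact_mod_cast hc
    obtain ⟨hcv, hcS⟩ := Finset.mem_erase.1 hc'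
    obtain ⟨f, hf⟩ := havoid c hcS hcv
    exact ⟨D c, f, hf⟩
  · obtain ⟨f, hf0, hfm, hfmem, hfadj⟩ := hDspec v hv
    refine ⟨f (D v - 1), ?_, ?_⟩
    · apply Finset.mem_erase.2
      constructor
      · intro hkv
        have hpre : ∃ g, IsWalk (S : Set (Vd d)) a v (D v - 1) g :=
          ⟨f, hf0, hkv, fun j hj => hfmem j (by omega), fun j hj => hfadj j (by omega)⟩
        have := hDmin v hv (D v - 1) hpre
        omega
      · exact_mod_cast hfmem (D v - 1) (by omega)
    · have := hfadj (D v - 1) (by omega)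
      have heq : D v - 1 + 1 = D v := by omega
      rw [heq] at this
      rwa [hfm] at this

lemma traversal : ∀ (n : ℕ) (S : Finset (Vd d)), S.card = n →
    LatConnected (S : Set (Vd d)) → ∀ a ∈ S,
    ∃ f : ℕ → Vd d, f 0 = a ∧ (∀ k ≤ 2*(n-1), f k ∈ S) ∧
      (∀ k < 2*(n-1), latAdj (f k) (f (k+1))) ∧ ∀ v ∈ S, ∃ k ≤ 2*(n-1), f k = v := by
  intro n
  induction n using Nat.strong_induction_on with
  | _ n IH =>
  intro S hcard hS a ha
  by_cases hn1 : S.card ≤ 1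
  · have hSa : S = {a} := by
      apply Finset.eq_singleton_iff_unique_mem.2
      exact ⟨ha, fun x hx => Finset.card_le_one.1 hn1 x hx a ha⟩
    have hn : n = 1 := by rw [← hcard, hSa]; simp
    refine ⟨fun _ => a, rfl, ?_, ?_, ?_⟩
    · intro k hk
      have : k = 0 := by omega
      exact this ▸ ha
    · intro k hk; omega
    · intro v hv
      rw [hSa] at hv
      exact ⟨0, by omega, (Finset.mem_singleton.1 hv).symm⟩
  · have h2 : 2 ≤ S.card := by omega
    obtain ⟨v, hv, hva, hconn', u, hu, hadj⟩ := exists_noncut S hS ha h2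
    have ha' : a ∈ S.erase v := Finset.mem_erase.2 ⟨fun h => hva h.symm, ha⟩
    have hcard' : (S.erase v).card = n - 1 := by
      rw [Finset.card_erase_of_mem hv, hcard]
    have hlt : n - 1 < n := by omega
    obtain ⟨f', hf0, hfmem, hfadj, hfcov⟩ := IH (n-1) hlt (S.erase v) hcard' hconn' a ha'
    obtain ⟨j, hj, hfj⟩ := hfcov u hu
    set L' := 2 * ((n-1) - 1) with hL'
    have hL : 2 * (n - 1) = L' + 2 := by omega
    refine ⟨fun k => if k ≤ j then f' k else if k = j + 1 then v else f' (k - 2), ?_, ?_, ?_, ?_⟩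
    · simp [hf0]
    · intro k hk
      rw [hL] at hk
      by_cases h1 : k ≤ j
      · simpa [h1] using Finset.erase_subset v S (hfmem k (le_trans h1 hj))
      · by_cases h2' : k = j + 1
        · simpa [h1, h2'] using hv
        · have hk2 : k - 2 ≤ L' := by omega
          simpa [h1, h2'] using Finset.erase_subset v S (hfmem (k-2) hk2)
    · intro k hk
      rw [hL] at hk
      by_cases h1 : k < j
      · have e1 : k ≤ j := by omega
        have e2 : k + 1 ≤ j := by omega
        simpa [e1, e2] using hfadj k (by omega)
      · show latAdj (if k ≤ j then f' k else if k = j + 1 then v else f' (k - 2))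
            (if k + 1 ≤ j then f' (k+1) else if k + 1 = j + 1 then v else f' (k + 1 - 2))
        by_cases h2' : k = j
        · have e1 : k ≤ j := by omega
          have e2 : ¬ (k + 1 ≤ j) := by omega
          have e3 : k + 1 = j + 1 := by omega
          rw [if_pos e1, if_neg e2, if_pos e3, h2', hfj]
          exact hadj
        · by_cases h3 : k = j + 1
          · have e1 : ¬ (k ≤ j) := by omega
            have e2 : ¬ (k + 1 ≤ j) := by omega
            have e3 : ¬ (k + 1 = j + 1) := by omega
            have e4 : k + 1 - 2 = j := by omega
            rw [if_neg e1, if_pos h3, if_neg e2, if_neg e3, e4, hfj]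
            exact latAdj_symm hadj
          · have e1 : ¬ (k ≤ j) := by omega
            have e2 : ¬ (k + 1 ≤ j) := by omega
            have e3 : ¬ (k + 1 = j + 1) := by omega
            have e4 : k + 1 - 2 = (k - 2) + 1 := by omega
            rw [if_neg e1, if_neg h3, if_neg e2, if_neg e3, e4]
            exact hfadj (k - 2) (by omega)
    · intro w hw
      rw [hL]
      by_cases hwv : w = v
      · refine ⟨j + 1, by omega, ?_⟩
        show (if j + 1 ≤ j then f' (j+1) else if j + 1 = j + 1 then v else f' (j + 1 - 2)) = w
        rw [if_neg (by omega : ¬ (j + 1 ≤ j)), if_pos rfl, hwv]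
      · obtain ⟨k, hk, hfk⟩ := hfcov w (Finset.mem_erase.2 ⟨hwv, hw⟩)
        by_cases h1 : k ≤ j
        · refine ⟨k, by omega, ?_⟩
          show (if k ≤ j then f' k else if k = j + 1 then v else f' (k - 2)) = w
          rw [if_pos h1]; exact hfk
        · refine ⟨k + 2, by omega, ?_⟩
          show (if k + 2 ≤ j then f' (k+2) else if k + 2 = j + 1 then v else f' (k + 2 - 2)) = w
          rw [if_neg (by omega : ¬ (k + 2 ≤ j)), if_neg (by omega : ¬ (k + 2 = j + 1))]
          have e : k + 2 - 2 = k := by omega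
          rw [e]; exact hfk

lemma exists_connected_subset (P : Set (Vd d)) (hP : LatConnected P) (h0 : (0:Vd d) ∈ P) :
    ∀ (n : ℕ), 1 ≤ n → (P.Finite → n ≤ P.ncard) →
    ∃ S : Finset (Vd d), (S : Set (Vd d)) ⊆ P ∧ (0:Vd d) ∈ S ∧ S.card = n ∧
      LatConnected (S : Set (Vd d)) := by
  intro n
  induction n with
  | zero => omega
  | succ n IH =>
    intro _ hcard
    by_cases hn : n = 0
    · subst hn
      refine ⟨{0}, by simpa using h0, Finset.mem_singleton_self 0, Finset.card_singleton 0, ?_⟩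
      intro x hx y hy
      simp only [Finset.coe_singleton, Set.mem_singleton_iff] at hx hy
      refine ⟨0, fun _ => x, rfl, by rw [hx, hy], fun k _ => ?_, fun k hk => by omega⟩
      simp only [Finset.coe_singleton, Set.mem_singleton_iff]
      exact hx
    · obtain ⟨S, hSP, h0S, hScard, hSconn⟩ := IH (by omega) (fun hf => by have := hcard hf; omega)
      -- find b ∈ P \ S
      have hbex : ∃ b ∈ P, b ∉ S := by
        by_contra hcon
        push_neg at hcon
        have hPS : P ⊆ (S : Set (Vd d)) := fun x hx => by exact_mod_cast hcon x hx
        have hPfin : P.Finite := Set.Finite.subset (S.finite_toSet) hPS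
        have := hcard hPfin
        have hle : P.ncard ≤ S.card := by
          have := Set.ncard_le_ncard hPS (S.finite_toSet)
          simpa [Set.ncard_coe_finset] using this
        omega
      obtain ⟨b, hbP, hbS⟩ := hbex
      obtain ⟨m, f, hf0, hfm, hfmem, hfadj⟩ := hP 0 h0 b hbP
      have hexk : ∃ k, k ≤ m ∧ f k ∉ S := ⟨m, le_refl m, by rwa [hfm]⟩
      classical
      let jj := Nat.find hexk
      obtain ⟨hjm, hjS⟩ : jj ≤ m ∧ f jj ∉ S := Nat.find_spec hexk
      have hj1 : 1 ≤ jj := by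
        rcases Nat.eq_zero_or_pos jj with h | h
        · exfalso; apply hjS; rw [h, hf0]; exact h0S
        · exact h
      have hprev : f (jj - 1) ∈ S := by
        by_contra hcon
        exact Nat.find_min hexk (show jj - 1 < jj by omega) ⟨by omega, hcon⟩
      have hadj : latAdj (f (jj - 1)) (f jj) := by
        have := hfadj (jj - 1) (by omega)
        have heq : jj - 1 + 1 = jj := by omega
        rwa [heq] at this
      refine ⟨insert (f jj) S, ?_, ?_, ?_, ?_⟩
      · intro x hx
        simp only [Finset.coe_insert, Set.mem_insert_iff] at hx
        rcases hx with h | h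
        · exact h ▸ hfmem jj hjm
        · exact hSP h
      · exact Finset.mem_insert_of_mem h0S
      · rw [Finset.card_insert_of_notMem hjS, hScard]
      · exact latConnected_insert hSconn hprev hadj

end STgraph

namespace STgraph
variable {d : ℕ}

noncomputable def dirOf (e : Fin d × Bool) : Vd d := Pi.single e.1 (if e.2 then 1 else -1)

lemma sum_natAbs_dirOf (e : Fin d × Bool) : (∑ i, ((dirOf e) i).natAbs) = 1 := by
  unfold dirOf
  rw [Finset.sum_eq_single e.1]
  · cases e.2 <;> simp
  · intro j _ hj
    simp [Pi.single_eq_of_ne hj]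
  · simp

lemma abs_dirOf_le (e : Fin d × Bool) (i : Fin d) : |dirOf e i| ≤ 1 := by
  unfold dirOf
  by_cases h : i = e.1
  · subst h; cases e.2 <;> simp
  · simp [Pi.single_eq_of_ne h]

lemma nat_sum_eq_one {ι : Type*} [Fintype ι] {g : ι → ℕ} (h : ∑ i, g i = 1) :
    ∃ i, g i = 1 ∧ ∀ j, j ≠ i → g j = 0 := by
  have hne : ∃ i ∈ Finset.univ, g i ≠ 0 :=
    Finset.exists_ne_zero_of_sum_ne_zero (by omega)
  obtain ⟨i, _, hi⟩ := hne
  have hsplit : g i + ∑ j ∈ Finset.univ.erase i, g j = ∑ j, g j :=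
    Finset.add_sum_erase _ g (Finset.mem_univ i)
  have hrest : ∑ j ∈ Finset.univ.erase i, g j = 0 := by omega
  refine ⟨i, by omega, fun j hj => ?_⟩
  exact (Finset.sum_eq_zero_iff.1 hrest) j (Finset.mem_erase.2 ⟨hj, Finset.mem_univ j⟩)

lemma step_decomp {a b : Vd d} (h : latAdj a b) : ∃ e : Fin d × Bool, b = a + dirOf e := by
  have habs : ∀ i, (a i - b i).natAbs = (b i - a i).natAbs := by
    intro i
    rw [← Int.natAbs_neg]
    congr 1
    ring
  have hsum : ∑ i, (b i - a i).natAbs = 1 := by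
    rw [← h]
    exact Finset.sum_congr rfl fun i _ => (habs i).symm
  obtain ⟨i, h1, h0⟩ := nat_sum_eq_one hsum
  have hval : b i - a i = 1 ∨ b i - a i = -1 := by
    rcases Int.natAbs_eq (b i - a i) with he | he
    · left; rw [he, h1]; rfl
    · right; rw [he, h1]; rfl
  refine ⟨(i, decide (b i - a i = 1)), ?_⟩
  funext j
  show b j = a j + (Pi.single i (if decide (b i - a i = 1) then 1 else -1) : Vd d) j
  by_cases hj : j = i
  · subst hj
    rcases hval with he | he
    · simp [he, Pi.single_eq_same]
      omega
    · rw [Pi.single_eq_same]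
      have : ¬ (b j - a j = 1) := by omega
      simp [this]
      omega
  · have : (b j - a j).natAbs = 0 := h0 j hj
    have hz : b j - a j = 0 := Int.natAbs_eq_zero.1 this
    rw [Pi.single_eq_of_ne hj]
    omega

lemma latAdj_add_dirOf (x : Vd d) (e : Fin d × Bool) : latAdj x (x + dirOf e) := by
  unfold latAdj
  rw [← sum_natAbs_dirOf e]
  refine Finset.sum_congr rfl fun i _ => ?_
  rw [← Int.natAbs_neg]
  congr 1
  show -(x i - (x i + dirOf e i)) = dirOf e i
  ring

noncomputable def posOf {L : ℕ} (s : Fin L → Fin d × Bool) (k : ℕ) : Vd d :=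
  ∑ j : Fin L, if (j : ℕ) < k then dirOf (s j) else 0

lemma posOf_zero {L : ℕ} (s : Fin L → Fin d × Bool) : posOf s 0 = 0 := by
  simp [posOf]

lemma posOf_succ {L : ℕ} (s : Fin L → Fin d × Bool) {k : ℕ} (hk : k < L) :
    posOf s (k+1) = posOf s k + dirOf (s ⟨k, hk⟩) := by
  unfold posOf
  have hsplit : ∀ j : Fin L, (if (j:ℕ) < k+1 then dirOf (s j) else 0)
      = (if (j:ℕ) < k then dirOf (s j) else 0) + (if (j:ℕ) = k then dirOf (s j) else 0) := by
    intro j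
    by_cases h1 : (j:ℕ) < k
    · rw [if_pos (by omega), if_pos h1, if_neg (by omega)]
      simp
    · by_cases h2 : (j:ℕ) = k
      · rw [if_pos (by omega), if_neg h1, if_pos h2]
        simp
      · rw [if_neg (by omega), if_neg h1, if_neg h2]
        simp
  rw [Finset.sum_congr rfl (fun j _ => hsplit j), Finset.sum_add_distrib]
  congr 1
  rw [Finset.sum_eq_single (⟨k, hk⟩ : Fin L)]
  · rw [if_pos rfl]
  · intro j _ hj
    rw [if_neg (fun hc => hj (Fin.ext hc))]
  · intro hc
    exact absurd (Finset.mem_univ _) hc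

lemma posOf_eq_walk {L : ℕ} {f : ℕ → Vd d} (hf0 : f 0 = 0)
    (hadj : ∀ k < L, latAdj (f k) (f (k+1))) :
    ∃ s : Fin L → Fin d × Bool, ∀ k ≤ L, posOf s k = f k := by
  classical
  have hstep : ∀ j : Fin L, ∃ e : Fin d × Bool, f ((j:ℕ)+1) = f (j:ℕ) + dirOf e :=
    fun j => step_decomp (hadj j j.isLt)
  refine ⟨fun j => Classical.choose (hstep j), ?_⟩
  intro k hk
  induction k with
  | zero => rw [posOf_zero, hf0]
  | succ k IH =>
    have hkL : k < L := by omega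
    rw [posOf_succ _ hkL, IH (by omega)]
    exact (Classical.choose_spec (hstep ⟨k, hkL⟩)).symm

lemma abs_posOf_le {L : ℕ} (s : Fin L → Fin d × Bool) (k : ℕ) (i : Fin d) :
    |posOf s k i| ≤ (L : ℤ) := by
  unfold posOf
  rw [Finset.sum_apply]
  refine le_trans (Finset.abs_sum_le_sum_abs _ _) ?_
  have : ∀ j : Fin L, |(if (j:ℕ) < k then dirOf (s j) else 0) i| ≤ 1 := by
    intro j
    by_cases h : (j:ℕ) < k
    · rw [if_pos h]; exact abs_dirOf_le _ _
    · rw [if_neg h]; simp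
  refine le_trans (Finset.sum_le_sum fun j _ => this j) ?_
  simp

lemma card_steps (L : ℕ) : Fintype.card (Fin L → Fin d × Bool) = (2*d)^L := by
  rw [Fintype.card_fun]
  simp [Fintype.card_prod, mul_comm]

lemma four_sq_le_seven_pow : ∀ m : ℕ, 1 ≤ m → (2*m)^2 ≤ 7^m := by
  intro m
  induction m with
  | zero => omega
  | succ m IH =>
    intro _
    by_cases hm : m = 0
    · subst hm; norm_num
    · have h1 : 1 ≤ m := by omega
      have h2 := IH h1
      have h3 : (2*(m+1))^2 ≤ 7 * (2*m)^2 := by nlinarith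
      calc (2*(m+1))^2 ≤ 7 * (2*m)^2 := h3
        _ ≤ 7 * 7^m := by omega
        _ = 7^(m+1) := by ring

end STgraph

namespace STmeas
open STgraph
variable {d : ℕ}

lemma measurableSet_rel (v w : Vd d) : MeasurableSet {π : Setoid (Vd d) | π.r v w} :=
  MeasurableSpace.measurableSet_generateFrom ⟨v, w, rfl⟩

noncomputable def blocksFinset (π : Setoid (Vd d)) (F : Finset (Vd d)) : Finset (Set (Vd d)) :=
  F.image (fun v => {w | w ∈ F ∧ π.r v w})

lemma blocks_coe (π : Setoid (Vd d)) (F : Finset (Vd d)) :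
    {S : Set (Vd d) | ∃ v ∈ F, S = {w | w ∈ F ∧ π.r v w}} = ↑(blocksFinset π F) := by
  ext S
  simp only [blocksFinset, Finset.coe_image, Set.mem_image, Set.mem_setOf_eq, Finset.mem_coe]
  constructor
  · rintro ⟨v, hv, rfl⟩; exact ⟨v, hv, rfl⟩
  · rintro ⟨v, hv, rfl⟩; exact ⟨v, hv, rfl⟩

noncomputable def wfactor (p : ℝ) (b : Vd d → Bool) (B : Set (Vd d)) : ℝ :=
  (if ∀ i ∈ B, b i = true then p else 0) + (if ∀ i ∈ B, b i = false then 1 - p else 0)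

lemma cylW_eq_prod (p : ℝ) (F : Finset (Vd d)) (π : Setoid (Vd d)) (b : Vd d → Bool) :
    cylW p F π b = ∏ B ∈ blocksFinset π F, wfactor p b B := by
  unfold cylW
  rw [blocks_coe]
  exact finprod_mem_coe_finset _ _

lemma wfactor_nonneg {p : ℝ} (hp : 0 ≤ p) (hp1 : p ≤ 1) (b : Vd d → Bool) (B : Set (Vd d)) :
    0 ≤ wfactor p b B := by
  unfold wfactor
  have h1 : (0:ℝ) ≤ if ∀ i ∈ B, b i = true then p else 0 := by positivity
  have h2 : (0:ℝ) ≤ if ∀ i ∈ B, b i = false then 1 - p else 0 := by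
    by_cases h : ∀ i ∈ B, b i = false
    · rw [if_pos h]; linarith
    · rw [if_neg h]
  linarith

lemma wfactor_le_one {p : ℝ} (hp : 0 ≤ p) (hp1 : p ≤ 1) (b : Vd d → Bool) (B : Set (Vd d))
    (hB : B.Nonempty) : wfactor p b B ≤ 1 := by
  unfold wfactor
  obtain ⟨x, hx⟩ := hB
  by_cases h1 : ∀ i ∈ B, b i = true
  · have h2 : ¬ ∀ i ∈ B, b i = false := by
      intro h2
      have := h1 x hx
      have := h2 x hx
      simp_all
    rw [if_pos h1, if_neg h2]
    linarith
  · rw [if_neg h1]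
    by_cases h2 : ∀ i ∈ B, b i = false
    · rw [if_pos h2]; linarith
    · rw [if_neg h2]; linarith

lemma cylW_nonneg {p : ℝ} (hp : 0 ≤ p) (hp1 : p ≤ 1) (F : Finset (Vd d)) (π : Setoid (Vd d))
    (b : Vd d → Bool) : 0 ≤ cylW p F π b := by
  rw [cylW_eq_prod]
  exact Finset.prod_nonneg fun B _ => wfactor_nonneg hp hp1 b B

lemma mem_blocksFinset_nonempty {π : Setoid (Vd d)} {F : Finset (Vd d)} {B : Set (Vd d)}
    (hB : B ∈ blocksFinset π F) : B.Nonempty := by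
  obtain ⟨v, hv, rfl⟩ := Finset.mem_image.1 hB
  exact ⟨v, hv, π.iseqv.refl v⟩

lemma mem_blocksFinset_subset {π : Setoid (Vd d)} {F : Finset (Vd d)} {B : Set (Vd d)}
    (hB : B ∈ blocksFinset π F) : B ⊆ ↑F := by
  obtain ⟨v, hv, rfl⟩ := Finset.mem_image.1 hB
  intro x hx
  exact_mod_cast hx.1

lemma blocks_disjoint {π : Setoid (Vd d)} {F : Finset (Vd d)} {B B' : Set (Vd d)}
    (hB : B ∈ blocksFinset π F) (hB' : B' ∈ blocksFinset π F) (hne : B ≠ B') {x : Vd d}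
    (hx : x ∈ B) (hx' : x ∈ B') : False := by
  obtain ⟨v, hv, rfl⟩ := Finset.mem_image.1 hB
  obtain ⟨v', hv', rfl⟩ := Finset.mem_image.1 hB'
  apply hne
  have h1 : π.r v x := hx.2
  have h2 : π.r v' x := hx'.2
  ext w
  simp only [Set.mem_setOf_eq]
  constructor
  · rintro ⟨hwF, hw⟩
    exact ⟨hwF, π.iseqv.trans h2 (π.iseqv.trans (π.iseqv.symm h1) hw)⟩
  · rintro ⟨hwF, hw⟩
    exact ⟨hwF, π.iseqv.trans h1 (π.iseqv.trans (π.iseqv.symm h2) hw)⟩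

lemma cylW_le_one {p : ℝ} (hp : 0 ≤ p) (hp1 : p ≤ 1) (F : Finset (Vd d)) (π : Setoid (Vd d))
    (b : Vd d → Bool) : cylW p F π b ≤ 1 := by
  rw [cylW_eq_prod]
  apply Finset.prod_le_one
  · exact fun B _ => wfactor_nonneg hp hp1 b B
  · exact fun B hB => wfactor_le_one hp hp1 b B (mem_blocksFinset_nonempty hB)

lemma cylW_congr {p : ℝ} {F : Finset (Vd d)} {π₁ π₂ : Setoid (Vd d)} {b : Vd d → Bool}
    (h : ∀ v ∈ F, ∀ w ∈ F, (π₁.r v w ↔ π₂.r v w)) : cylW p F π₁ b = cylW p F π₂ b := by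
  unfold cylW
  have hset : {S : Set (Vd d) | ∃ v ∈ F, S = {w | w ∈ F ∧ π₁.r v w}}
      = {S : Set (Vd d) | ∃ v ∈ F, S = {w | w ∈ F ∧ π₂.r v w}} := by
    ext S
    simp only [Set.mem_setOf_eq]
    constructor
    · rintro ⟨v, hv, rfl⟩
      refine ⟨v, hv, ?_⟩
      ext w
      simp only [Set.mem_setOf_eq]
      exact and_congr_right fun hw => h v hv w hw
    · rintro ⟨v, hv, rfl⟩
      refine ⟨v, hv, ?_⟩
      ext w
      simp only [Set.mem_setOf_eq]
      exact and_congr_right fun hw => (h v hv w hw).symm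
  rw [hset]

lemma measurable_cylW (p : ℝ) (F : Finset (Vd d)) (b : Vd d → Bool) :
    Measurable (fun π : Setoid (Vd d) => cylW p F π b) := by
  classical
  let m : Setoid (Vd d) → (F → F → Bool) := fun π v w => decide (π.r ↑v ↑w)
  have hMset : ∀ M : F → F → Bool, MeasurableSet {π : Setoid (Vd d) | m π = M} := by
    intro M
    have hval : {π : Setoid (Vd d) | m π = M}
        = ⋂ (v : F) (w : F), {π : Setoid (Vd d) | decide (π.r ↑v ↑w) = M v w} := by
      ext π
      simp only [Set.mem_setOf_eq, Set.mem_iInter, funext_iff, m]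
    rw [hval]
    refine MeasurableSet.iInter fun v => MeasurableSet.iInter fun w => ?_
    cases hM : M v w
    · have : {π : Setoid (Vd d) | decide (π.r ↑v ↑w) = false}
          = {π : Setoid (Vd d) | π.r ↑v ↑w}ᶜ := by
        ext π; simp
      rw [this]
      exact (measurableSet_rel _ _).compl
    · have : {π : Setoid (Vd d) | decide (π.r ↑v ↑w) = true}
          = {π : Setoid (Vd d) | π.r ↑v ↑w} := by
        ext π; simp
      rw [this]
      exact measurableSet_rel _ _
  let G : (F → F → Bool) → ℝ := fun M =>
    if h : ∃ π : Setoid (Vd d), m π = M then cylW p F (Classical.choose h) b else 0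
  have hfact : (fun π : Setoid (Vd d) => cylW p F π b)
      = fun π => ∑ M : F → F → Bool, if m π = M then G M else 0 := by
    funext π
    rw [Finset.sum_eq_single (m π)]
    · rw [if_pos rfl]
      have h : ∃ π' : Setoid (Vd d), m π' = m π := ⟨π, rfl⟩
      show cylW p F π b = dite _ _ _
      rw [dif_pos h]
      apply cylW_congr
      intro v hv w hw
      have hspec := Classical.choose_spec h
      have := congrFun (congrFun hspec ⟨v, hv⟩) ⟨w, hw⟩
      exact (decide_eq_decide.1 this).symm
    · intro M _ hM
      rw [if_neg (fun hc => hM hc.symm)]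
    · intro h
      exact absurd (Finset.mem_univ _) h
  rw [hfact]
  apply Finset.measurable_sum
  intro M _
  exact Measurable.ite (hMset M) measurable_const measurable_const

lemma integrable_cylW {p : ℝ} (hp : 0 ≤ p) (hp1 : p ≤ 1) (ν : Measure (Setoid (Vd d)))
    [IsProbabilityMeasure ν] (F : Finset (Vd d)) (b : Vd d → Bool) :
    Integrable (fun π => cylW p F π b) ν := by
  refine Integrable.mono' (integrable_const 1) (measurable_cylW p F b).aestronglyMeasurable ?_
  refine Filter.Eventually.of_forall fun π => ?_
  rw [Real.norm_eq_abs, abs_of_nonneg (cylW_nonneg hp hp1 F π b)]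
  exact cylW_le_one hp hp1 F π b

end STmeas

namespace STmeas
open STgraph
variable {d : ℕ}

lemma exists_finset_subset_card (P : Set (Vd d)) (n : ℕ) (h : P.Finite → n ≤ P.ncard) :
    ∃ t : Finset (Vd d), ↑t ⊆ P ∧ t.card = n := by
  by_cases hfin : P.Finite
  · have hcard : n ≤ hfin.toFinset.card := by
      have heq := Set.ncard_eq_toFinset_card P hfin
      have h2 := h hfin
      omega
    obtain ⟨t, ht, htc⟩ := Finset.exists_subset_card_eq hcard
    refine ⟨t, ?_, htc⟩
    intro x hx
    exact hfin.mem_toFinset.1 (ht hx)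
  · exact Set.Infinite.exists_subset_card_eq hfin n

lemma bigBlock_iff (n : ℕ) (π : Setoid (Vd d)) :
    π ∈ bigBlockEvent d n ↔ ∃ g : Fin n → Vd d, Function.Injective g ∧ ∀ i, π.r 0 (g i) := by
  constructor
  · intro h
    obtain ⟨t, htsub, htc⟩ := exists_finset_subset_card {w : Vd d | π.r 0 w} n h
    let e := t.equivFin
    refine ⟨fun i => ↑(e.symm (Fin.cast htc.symm i)), ?_, ?_⟩
    · intro i j hij
      have := e.symm.injective (Subtype.coe_injective hij)
      exact Fin.ext (by simpa using congrArg Fin.val this)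
    · intro i
      exact htsub (e.symm (Fin.cast htc.symm i)).2
  · rintro ⟨g, hg, hrel⟩ hfin
    have hsub : ↑(Finset.univ.image g) ⊆ {w : Vd d | π.r 0 w} := by
      intro x hx
      simp only [Finset.coe_image, Set.mem_image, Finset.mem_coe] at hx
      obtain ⟨i, _, rfl⟩ := hx
      exact hrel i
    have h1 : (Finset.univ.image g).card = n := by
      rw [Finset.card_image_of_injective _ hg, Finset.card_univ, Fintype.card_fin]
    calc n = ((Finset.univ.image g : Finset (Vd d)) : Set (Vd d)).ncard := by
              rw [Set.ncard_coe_finset, h1]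
      _ ≤ _ := Set.ncard_le_ncard hsub hfin

lemma measurableSet_bigBlock (n : ℕ) : MeasurableSet (bigBlockEvent d n) := by
  have heq : bigBlockEvent d n = ⋃ (g : Fin n → Vd d) (_ : Function.Injective g),
      ⋂ i, {π : Setoid (Vd d) | π.r 0 (g i)} := by
    ext π
    rw [Set.mem_iUnion]
    constructor
    · intro h
      obtain ⟨g, hg, hrel⟩ := (bigBlock_iff n π).1 h
      exact ⟨g, Set.mem_iUnion.2 ⟨hg, Set.mem_iInter.2 fun i => hrel i⟩⟩
    · rintro ⟨g, hmem⟩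
      obtain ⟨hg, hrel⟩ := Set.mem_iUnion.1 hmem
      exact (bigBlock_iff n π).2 ⟨g, hg, fun i => Set.mem_iInter.1 hrel i⟩
  rw [heq]
  exact MeasurableSet.iUnion fun g => MeasurableSet.iUnion fun _ =>
    MeasurableSet.iInter fun i => measurableSet_rel 0 (g i)

def connEvent (d : ℕ) : Set (Setoid (Vd d)) := {π | ∀ B ∈ π.classes, LatConnected B}

lemma measurableSet_conn : MeasurableSet (connEvent d) := by
  have heq : connEvent d = ⋂ (y : Vd d) (a : Vd d) (b : Vd d),
      ((⋃ (m : ℕ) (g : Fin (m+1) → Vd d)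
          (_ : g 0 = a ∧ g (Fin.last m) = b ∧
            ∀ (k : ℕ) (hk : k < m), latAdj (g ⟨k, by omega⟩) (g ⟨k+1, by omega⟩)),
          ⋂ k : Fin (m+1), {π : Setoid (Vd d) | π.r (g k) y})
        ∪ ({π : Setoid (Vd d) | π.r a y}ᶜ ∪ {π : Setoid (Vd d) | π.r b y}ᶜ)) := by
    ext π
    simp only [connEvent, Set.mem_setOf_eq, Set.mem_iInter]
    constructor
    · intro h y a b
      by_cases hay : π.r a y
      · by_cases hby : π.r b y
        · apply Set.mem_union_left
          have hBcl : {x | π.r x y} ∈ π.classes := ⟨y, rfl⟩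
          obtain ⟨m, f, hf0, hfm, hfmem, hfadj⟩ := h _ hBcl a hay b hby
          rw [Set.mem_iUnion]
          refine ⟨m, Set.mem_iUnion.2 ⟨fun k => f ↑k, Set.mem_iUnion.2 ⟨⟨?_, ?_, ?_⟩, ?_⟩⟩⟩
          · show f ((0 : Fin (m+1)) : ℕ) = a
            rw [Fin.val_zero]
            exact hf0
          · show f ((Fin.last m : Fin (m+1)) : ℕ) = b
            rw [Fin.val_last]
            exact hfm
          · intro k hk
            exact hfadj k hk
          · exact Set.mem_iInter.2 fun k => hfmem k (by omega : (k : ℕ) ≤ m)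
        · exact Set.mem_union_right _ (Set.mem_union_right _ hby)
      · exact Set.mem_union_right _ (Set.mem_union_left _ hay)
    · intro h B hB a ha b hb
      obtain ⟨y, rfl⟩ := hB
      have hay : π.r a y := ha
      have hby : π.r b y := hb
      rcases h y a b with hmain | hbad
      · rw [Set.mem_iUnion] at hmain
        obtain ⟨m, hm⟩ := hmain
        obtain ⟨g, hg⟩ := Set.mem_iUnion.1 hm
        obtain ⟨⟨hg0, hgm, hgadj⟩, hgmem⟩ := Set.mem_iUnion.1 hg
        refine ⟨m, fun k => if hk : k ≤ m then g ⟨k, by omega⟩ else b, ?_, ?_, ?_, ?_⟩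
        · show (if hk : (0:ℕ) ≤ m then g ⟨0, by omega⟩ else b) = a
          have he : (⟨0, by omega⟩ : Fin (m+1)) = 0 := Fin.ext (by simp)
          rw [dif_pos (Nat.zero_le m), he, hg0]
        · show (if hk : m ≤ m then g ⟨m, by omega⟩ else b) = b
          have he : (⟨m, by omega⟩ : Fin (m+1)) = Fin.last m := Fin.ext (by simp [Fin.last])
          rw [dif_pos (le_refl m), he, hgm]
        · intro k hk
          show (if h : k ≤ m then g ⟨k, by omega⟩ else b) ∈ {x | π.r x y}
          rw [dif_pos hk]
          exact Set.mem_iInter.1 hgmem _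
        · intro k hk
          show latAdj (if h : k ≤ m then g ⟨k, by omega⟩ else b)
            (if h : k + 1 ≤ m then g ⟨k+1, by omega⟩ else b)
          rw [dif_pos (by omega : k ≤ m), dif_pos (by omega : k + 1 ≤ m)]
          exact hgadj k hk
      · rcases hbad with hc | hc
        · exact absurd hay hc
        · exact absurd hby hc
  rw [heq]
  refine MeasurableSet.iInter fun y => MeasurableSet.iInter fun a => MeasurableSet.iInter fun b =>
    MeasurableSet.union ?_ (MeasurableSet.union (measurableSet_rel a y).compl
      (measurableSet_rel b y).compl)
  refine MeasurableSet.iUnion fun m => MeasurableSet.iUnion fun g =>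
    MeasurableSet.iUnion fun _ => MeasurableSet.iInter fun k => measurableSet_rel _ y

end STmeas

namespace STmain
open STgraph STmeas
variable {d : ℕ}

def Lix (n : ℕ) : ℕ := 2*(n-1)

noncomputable def VSet {d : ℕ} (n : ℕ) (s : Fin (Lix n) → Fin d × Bool) : Finset (Vd d) :=
  (Finset.range (Lix n + 1)).image (posOf s)

noncomputable def Sgood (d n : ℕ) : Finset (Fin (Lix n) → Fin d × Bool) :=
  Finset.univ.filter (fun s => n ≤ (VSet n s).card)

noncomputable def Uev (d n : ℕ) : Set (Vd d → Bool) :=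
  ⋃ s ∈ Sgood d n, cylEvent (VSet n s) (fun _ => false)

noncomputable def Fbox (d n : ℕ) : Finset (Vd d) :=
  Fintype.piFinset (fun _ : Fin d => Finset.Icc (-(Lix n : ℤ)) (Lix n))

noncomputable def extC {V : Type*} (F : Finset V) (c : {x // x ∈ F} → Bool) : V → Bool :=
  fun v => if h : v ∈ F then c ⟨v, h⟩ else false

lemma posOf_mem_Fbox {n : ℕ} (s : Fin (Lix n) → Fin d × Bool) {k : ℕ} (hk : k ≤ Lix n) :
    posOf s k ∈ Fbox d n := by
  rw [Fbox, Fintype.mem_piFinset]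
  intro i
  rw [Finset.mem_Icc]
  have := abs_posOf_le s k i
  constructor <;> [linarith [neg_abs_le (posOf s k i)]; linarith [le_abs_self (posOf s k i)]]

lemma VSet_subset_Fbox {n : ℕ} (s : Fin (Lix n) → Fin d × Bool) : VSet n s ⊆ Fbox d n := by
  intro v hv
  obtain ⟨k, hk, rfl⟩ := Finset.mem_image.1 hv
  exact posOf_mem_Fbox s (Nat.lt_succ_iff.1 (Finset.mem_range.1 hk))

lemma zero_mem_Fbox (n : ℕ) : (0 : Vd d) ∈ Fbox d n := by
  rw [Fbox, Fintype.mem_piFinset]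
  intro i
  rw [Finset.mem_Icc]
  constructor <;> simp [Pi.zero_apply] <;> omega

lemma measurableSet_cylEvent {V : Type*} [MeasurableSpace (V → Bool)]
    (hpi : ∀ (v : V) (y : Bool), MeasurableSet {x : V → Bool | x v = y})
    (F : Finset V) (b : V → Bool) : MeasurableSet (cylEvent F b) := by
  have : cylEvent F b = ⋂ v ∈ F, {x : V → Bool | x v = b v} := by
    ext x
    simp [cylEvent, Set.mem_iInter]
  rw [this]
  exact MeasurableSet.biInter F.countable_toSet fun v _ => hpi v (b v)

lemma measurableSet_cylEvent' {V : Type*} (F : Finset V) (b : V → Bool) :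
    MeasurableSet (cylEvent F b) := by
  refine measurableSet_cylEvent (fun v y => ?_) F b
  have : {x : V → Bool | x v = y} = (fun x : V → Bool => x v) ⁻¹' {y} := rfl
  rw [this]
  exact measurable_pi_apply v (measurableSet_singleton y)

lemma measurableSet_Uev (d n : ℕ) : MeasurableSet (Uev d n) :=
  MeasurableSet.biUnion (Sgood d n).countable_toSet
    (fun s _ => measurableSet_cylEvent' (VSet n s) (fun _ => false))

lemma Uev_mem_iff {n : ℕ} (x : Vd d → Bool) :
    x ∈ Uev d n ↔ ∃ s ∈ Sgood d n, ∀ v ∈ VSet n s, x v = false := by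
  simp [Uev, cylEvent, Set.mem_iUnion]

lemma Uev_agree {n : ℕ} {x y : Vd d → Bool} (h : ∀ v ∈ Fbox d n, x v = y v) :
    x ∈ Uev d n → y ∈ Uev d n := by
  rw [Uev_mem_iff, Uev_mem_iff]
  rintro ⟨s, hs, hval⟩
  exact ⟨s, hs, fun v hv => by rw [← h v (VSet_subset_Fbox s hv)]; exact hval v hv⟩

/-- Domination transfer for decreasing events. -/
lemma dom_measure_le {V : Type*} {μα μ : Measure (V → Bool)} (hdom : StochDom μα μ)
    (U : Set (V → Bool)) (hU : MeasurableSet U)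
    (hmono : ∀ x y : V → Bool, (∀ v, x v = true → y v = true) → y ∈ U → x ∈ U) :
    μ U ≤ μα U := by
  obtain ⟨κ, h1, h2, h0⟩ := hdom
  have hμU : μ U = κ (Prod.snd ⁻¹' U) := by
    rw [← h2, Measure.map_apply measurable_snd hU]
  have hμαU : μα U = κ (Prod.fst ⁻¹' U) := by
    rw [← h1, Measure.map_apply measurable_fst hU]
  rw [hμU, hμαU]
  set good := {q : (V → Bool) × (V → Bool) | ∀ v, q.1 v = true → q.2 v = true} with hgood
  calc κ (Prod.snd ⁻¹' U)
      ≤ κ (Prod.snd ⁻¹' U ∩ good) + κ (Prod.snd ⁻¹' U \ good) :=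
        measure_le_inter_add_diff κ _ good
    _ ≤ κ (Prod.fst ⁻¹' U) + 0 := by
        refine add_le_add (measure_mono ?_) (le_trans (measure_mono ?_) (le_of_eq h0))
        · rintro ⟨q1, q2⟩ ⟨hq2, hq⟩
          exact hmono q1 q2 hq hq2
        · exact fun q hq => hq.2
    _ = κ (Prod.fst ⁻¹' U) := add_zero _

lemma Uev_decreasing {n : ℕ} (x y : Vd d → Bool) (h : ∀ v, x v = true → y v = true) :
    y ∈ Uev d n → x ∈ Uev d n := by
  rw [Uev_mem_iff, Uev_mem_iff]
  rintro ⟨s, hs, hval⟩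
  refine ⟨s, hs, fun v hv => ?_⟩
  have hy := hval v hv
  cases hx : x v
  · rfl
  · exact absurd (h v hx) (by rw [hy]; simp)

/-- Upper bound under the Bernoulli product measure. -/
lemma upper_bound {n : ℕ} {α : ℝ} (hα0 : 0 ≤ α) (hα1 : α ≤ 1)
    {μα : Measure (Vd d → Bool)} (hμα : IsBernoulliProduct α μα) :
    μα (Uev d n) ≤ ((2*d)^(Lix n) : ℕ) * ENNReal.ofReal ((1-α)^n) := by
  have hEs : ∀ s ∈ Sgood d n, μα (cylEvent (VSet n s) (fun _ => false))
      ≤ ENNReal.ofReal ((1-α)^n) := by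
    intro s hs
    rw [hμα.2 (VSet n s) (fun _ => false)]
    have : ∀ v ∈ VSet n s, ENNReal.ofReal (if (false : Bool) then α else 1 - α)
        = ENNReal.ofReal (1-α) := by intro v _; simp
    rw [Finset.prod_congr rfl this, Finset.prod_const, ← ENNReal.ofReal_pow (by linarith)]
    apply ENNReal.ofReal_le_ofReal
    have hcard : n ≤ (VSet n s).card := (Finset.mem_filter.1 hs).2
    exact pow_le_pow_of_le_one (by linarith) (by linarith) hcard
  calc μα (Uev d n) ≤ ∑ s ∈ Sgood d n, μα (cylEvent (VSet n s) (fun _ => false)) :=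
        measure_biUnion_finset_le _ _
    _ ≤ ∑ _s ∈ Sgood d n, ENNReal.ofReal ((1-α)^n) := Finset.sum_le_sum hEs
    _ = ((Sgood d n).card : ℕ) * ENNReal.ofReal ((1-α)^n) := by
        rw [Finset.sum_const, nsmul_eq_mul]
    _ ≤ ((2*d)^(Lix n) : ℕ) * ENNReal.ofReal ((1-α)^n) := by
        apply mul_le_mul_left
        have h1 : (Sgood d n).card ≤ Fintype.card (Fin (Lix n) → Fin d × Bool) :=
          Finset.card_le_univ _
        rw [card_steps] at h1
        exact_mod_cast Nat.cast_le.2 h1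

end STmain

namespace STmain
open STgraph STmeas MeasureTheory
variable {d : ℕ}

noncomputable def Gset (d n : ℕ) : Finset ({x // x ∈ Fbox d n} → Bool) :=
  Finset.univ.filter (fun c => extC (Fbox d n) c ∈ Uev d n)

set_option maxHeartbeats 1000000 in
lemma pointwise_lower {n : ℕ} (hn : 1 ≤ n) {p : ℝ} (hp0 : 0 ≤ p) (hp1 : p ≤ 1)
    (π : Setoid (Vd d)) (hbig : π ∈ bigBlockEvent d n) (hco : π ∈ connEvent d) :
    1 - p ≤ ∑ c ∈ Gset d n, cylW p (Fbox d n) π (extC (Fbox d n) c) := by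
  classical
  set F := Fbox d n with hFdef
  have hP0conn : LatConnected {w : Vd d | π.r 0 w} := by
    have h1 : {x : Vd d | π.r x 0} ∈ π.classes := ⟨0, rfl⟩
    have h2 : {w : Vd d | π.r 0 w} = {x : Vd d | π.r x 0} := by
      ext w
      exact ⟨fun h => π.iseqv.symm h, fun h => π.iseqv.symm h⟩
    rw [h2]
    exact hco _ h1
  have h0P : (0 : Vd d) ∈ {w : Vd d | π.r 0 w} := π.iseqv.refl 0
  obtain ⟨S, hSP, h0S, hScard, hSconn⟩ :=
    exists_connected_subset _ hP0conn h0P n hn hbig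
  obtain ⟨f, hf0, hfmem, hfadj, hfcov⟩ := traversal n S hScard hSconn 0 h0S
  obtain ⟨s, hs⟩ := posOf_eq_walk (L := Lix n) hf0 (fun k hk => hfadj k hk)
  have hVS : VSet n s = S := by
    apply Finset.ext
    intro v
    constructor
    · intro hv
      obtain ⟨k, hk, rfl⟩ := Finset.mem_image.1 hv
      have hkL : k ≤ Lix n := Nat.lt_succ_iff.1 (Finset.mem_range.1 hk)
      rw [hs k hkL]
      exact hfmem k hkL
    · intro hv
      obtain ⟨k, hk, hfk⟩ := hfcov v hv
      have hLix : Lix n = 2*(n-1) := rfl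
      exact Finset.mem_image.2 ⟨k, Finset.mem_range.2 (by omega), by rw [hs k hk, hfk]⟩
  have hsgood : s ∈ Sgood d n :=
    Finset.mem_filter.2 ⟨Finset.mem_univ _, by rw [hVS, hScard]⟩
  set B₀ : Set (Vd d) := {w | w ∈ F ∧ π.r 0 w} with hB₀def
  have h0F : (0 : Vd d) ∈ F := zero_mem_Fbox n
  have hB0mem : B₀ ∈ blocksFinset π F := Finset.mem_image.2 ⟨0, h0F, rfl⟩
  set T' := (blocksFinset π F).erase B₀ with hT'def
  set cS : Finset (Set (Vd d)) → ({x // x ∈ F} → Bool) :=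
    fun X v => decide (∃ B ∈ X, ↑v ∈ B) with hcSdef
  have hagree : ∀ (X : Finset (Set (Vd d))) (v : Vd d) (h : v ∈ F),
      extC F (cS X) v = decide (∃ B ∈ X, v ∈ B) := by
    intro X v h
    rw [extC, dif_pos h]
  have hvalB₀ : ∀ X ∈ T'.powerset, ∀ i ∈ B₀, extC F (cS X) i = false := by
    intro X hX i hi
    rw [hagree X i hi.1]
    simp only [decide_eq_false_iff_not]
    rintro ⟨B, hBX, hiB⟩
    have hBT' : B ∈ T' := Finset.mem_powerset.1 hX hBX
    exact blocks_disjoint (Finset.mem_of_mem_erase hBT') hB0mem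
      (Finset.ne_of_mem_erase hBT') hiB hi
  have hvalmem : ∀ X ∈ T'.powerset, ∀ B ∈ X, ∀ i ∈ B, extC F (cS X) i = true := by
    intro X hX B hBX i hiB
    have hBT' : B ∈ T' := Finset.mem_powerset.1 hX hBX
    have hiF : i ∈ F := by
      exact_mod_cast mem_blocksFinset_subset (Finset.mem_of_mem_erase hBT') hiB
    rw [hagree X i hiF]
    simp only [decide_eq_true_eq]
    exact ⟨B, hBX, hiB⟩
  have hvalnot : ∀ X ∈ T'.powerset, ∀ B ∈ T', B ∉ X → ∀ i ∈ B, extC F (cS X) i = false := by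
    intro X hX B hBT' hBX i hiB
    have hiF : i ∈ F := by
      exact_mod_cast mem_blocksFinset_subset (Finset.mem_of_mem_erase hBT') hiB
    rw [hagree X i hiF]
    simp only [decide_eq_false_iff_not]
    rintro ⟨B', hB'X, hiB'⟩
    have hB'T' : B' ∈ T' := Finset.mem_powerset.1 hX hB'X
    exact blocks_disjoint (Finset.mem_of_mem_erase hB'T') (Finset.mem_of_mem_erase hBT')
      (fun he => hBX (he ▸ hB'X)) hiB' hiB
  have hcylval : ∀ X ∈ T'.powerset, cylW p F π (extC F (cS X))
      = (1-p) * ((∏ _B ∈ X, p) * ∏ _B ∈ T' \ X, (1-p)) := by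
    intro X hX
    rw [cylW_eq_prod]
    have hins : blocksFinset π F = insert B₀ T' := (Finset.insert_erase hB0mem).symm
    rw [hins, Finset.prod_insert (Finset.notMem_erase _ _)]
    have h0B : (0:Vd d) ∈ B₀ := ⟨h0F, π.iseqv.refl 0⟩
    congr 1
    · rw [wfactor]
      have hff := hvalB₀ X hX
      rw [if_neg, if_pos hff]
      · ring
      · intro hall
        have h1 := hall 0 h0B
        have h2 := hff 0 h0B
        simp [h1] at h2
    · rw [← Finset.prod_sdiff (Finset.mem_powerset.1 hX), mul_comm]
      congr 1
      · apply Finset.prod_congr rfl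
        intro B hBX
        rw [wfactor]
        have hBT' := Finset.mem_powerset.1 hX hBX
        obtain ⟨x, hx⟩ := mem_blocksFinset_nonempty (Finset.mem_of_mem_erase hBT')
        rw [if_pos (hvalmem X hX B hBX), if_neg]
        · ring
        · intro hall
          have h1 := hall x hx
          have h2 := hvalmem X hX B hBX x hx
          simp [h2] at h1
      · apply Finset.prod_congr rfl
        intro B hB
        obtain ⟨hBT', hBX⟩ := Finset.mem_sdiff.1 hB
        rw [wfactor]
        obtain ⟨x, hx⟩ := mem_blocksFinset_nonempty (Finset.mem_of_mem_erase hBT')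
        rw [if_pos (hvalnot X hX B hBT' hBX), if_neg]
        · ring
        · intro hall
          have h1 := hall x hx
          have h2 := hvalnot X hX B hBT' hBX x hx
          simp [h1] at h2
  have hcG : ∀ X ∈ T'.powerset, cS X ∈ Gset d n := by
    intro X hX
    rw [Gset, Finset.mem_filter]
    refine ⟨Finset.mem_univ _, ?_⟩
    rw [Uev_mem_iff]
    refine ⟨s, hsgood, fun v hv => ?_⟩
    have hvF : v ∈ F := VSet_subset_Fbox s hv
    rw [hVS] at hv
    exact hvalB₀ X hX v ⟨hvF, hSP hv⟩
  have hinj : ∀ X ∈ T'.powerset, ∀ Y ∈ T'.powerset, cS X = cS Y → X = Y := by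
    have haux : ∀ X ∈ T'.powerset, ∀ Y ∈ T'.powerset, cS X = cS Y →
        ∀ B ∈ X, B ∈ Y := by
      intro X hX Y hY hXY B hBX
      have hBT' : B ∈ T' := Finset.mem_powerset.1 hX hBX
      obtain ⟨x, hx⟩ := mem_blocksFinset_nonempty (Finset.mem_of_mem_erase hBT')
      have hxF : x ∈ F := by
        exact_mod_cast mem_blocksFinset_subset (Finset.mem_of_mem_erase hBT') hx
      have h1 : cS X ⟨x, hxF⟩ = true := by
        simp only [hcSdef, decide_eq_true_eq]
        exact ⟨B, hBX, hx⟩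
      rw [hXY] at h1
      simp only [hcSdef, decide_eq_true_eq] at h1
      obtain ⟨B', hB'Y, hxB'⟩ := h1
      have hB'T' : B' ∈ T' := Finset.mem_powerset.1 hY hB'Y
      have hBB' : B = B' := by
        by_contra hne
        exact blocks_disjoint (Finset.mem_of_mem_erase hBT') (Finset.mem_of_mem_erase hB'T')
          hne hx hxB'
      rwa [hBB']
    intro X hX Y hY hXY
    apply Finset.ext
    intro B
    exact ⟨fun h => haux X hX Y hY hXY B h, fun h => haux Y hY X hX hXY.symm B h⟩
  have hsum : ∑ X ∈ T'.powerset, ((∏ _B ∈ X, p) * ∏ _B ∈ T' \ X, (1-p)) = 1 := by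
    rw [← Finset.prod_add]
    have : ∀ B ∈ T', p + (1 - p) = (1:ℝ) := fun _ _ => by ring
    rw [Finset.prod_congr rfl this, Finset.prod_const_one]
  have himg : (T'.powerset).image cS ⊆ Gset d n := by
    intro c hc
    obtain ⟨X, hX, rfl⟩ := Finset.mem_image.1 hc
    exact hcG X hX
  calc 1 - p = (1-p) * 1 := (mul_one _).symm
    _ = (1-p) * ∑ X ∈ T'.powerset, ((∏ _B ∈ X, p) * ∏ _B ∈ T' \ X, (1-p)) := by rw [hsum]
    _ = ∑ X ∈ T'.powerset, cylW p F π (extC F (cS X)) := by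
        rw [Finset.mul_sum]
        exact Finset.sum_congr rfl (fun X hX => (hcylval X hX).symm)
    _ = ∑ c ∈ (T'.powerset).image cS, cylW p F π (extC F c) := by
        rw [Finset.sum_image hinj]
    _ ≤ ∑ c ∈ Gset d n, cylW p F π (extC F c) :=
        Finset.sum_le_sum_of_subset_of_nonneg himg
          (fun c _ _ => cylW_nonneg hp0 hp1 F π _)

lemma lower_bound {n : ℕ} (hn : 1 ≤ n) {p : ℝ} (hp0 : 0 < p) (hp1 : p < 1)
    (ν : Measure (Setoid (Vd d))) [IsProbabilityMeasure ν]
    {μ : Measure (Vd d → Bool)} (hμ : IsColorProcess p ν μ) :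
    ENNReal.ofReal (1-p) * ν (bigBlockEvent d n ∩ connEvent d) ≤ μ (Uev d n) := by
  classical
  set F := Fbox d n with hFdef
  set G := Gset d n with hGdef
  set K := bigBlockEvent d n ∩ connEvent d with hKdef
  have hKmeas : MeasurableSet K := (measurableSet_bigBlock n).inter measurableSet_conn
  have hdecomp : Uev d n = ⋃ c ∈ G, cylEvent F (extC F c) := by
    ext x
    constructor
    · intro hx
      set c : {w // w ∈ F} → Bool := fun v => x ↑v with hcdef
      have hagr : ∀ v ∈ F, x v = extC F c v := by
        intro v hv
        rw [extC, dif_pos hv]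
      have hcG : c ∈ G := by
        rw [hGdef, Gset, Finset.mem_filter]
        exact ⟨Finset.mem_univ _, Uev_agree hagr hx⟩
      exact Set.mem_iUnion₂.2 ⟨c, hcG, fun v hv => hagr v hv⟩
    · intro hx
      obtain ⟨c, hcG, hcx⟩ := Set.mem_iUnion₂.1 hx
      have hcU : extC F c ∈ Uev d n := (Finset.mem_filter.1 hcG).2
      exact Uev_agree (fun v hv => (hcx v hv).symm) hcU
  have hdisj : (↑G : Set ({w // w ∈ F} → Bool)).PairwiseDisjoint
      (fun c => cylEvent F (extC F c)) := by
    intro c₁ _ c₂ _ hne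
    refine Set.disjoint_left.2 fun x hx₁ hx₂ => hne (funext fun v => ?_)
    have e₁ := hx₁ ↑v v.2
    have e₂ := hx₂ ↑v v.2
    rw [extC, dif_pos v.2] at e₁ e₂
    exact e₁.symm.trans e₂
  have hμU : μ (Uev d n) = ∑ c ∈ G, μ (cylEvent F (extC F c)) := by
    rw [hdecomp]
    exact measure_biUnion_finset hdisj (fun c _ => measurableSet_cylEvent' _ _)
  have hterm : ∀ c ∈ G, μ (cylEvent F (extC F c))
      = ENNReal.ofReal (∫ π, cylW p F π (extC F c) ∂ν) := fun c _ => hμ.2 F (extC F c)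
  rw [hμU, Finset.sum_congr rfl hterm,
    ← ENNReal.ofReal_sum_of_nonneg
      (fun c _ => integral_nonneg (fun π => cylW_nonneg hp0.le hp1.le F π _)),
    ← integral_finset_sum _ (fun c _ => integrable_cylW hp0.le hp1.le ν F _)]
  have hpoint : ∀ π : Setoid (Vd d),
      K.indicator (fun _ => 1 - p) π ≤ ∑ c ∈ G, cylW p F π (extC F c) := by
    intro π
    by_cases hπ : π ∈ K
    · rw [Set.indicator_of_mem hπ]
      exact pointwise_lower hn hp0.le hp1.le π hπ.1 hπ.2
    · rw [Set.indicator_of_notMem hπ]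
      exact Finset.sum_nonneg (fun c _ => cylW_nonneg hp0.le hp1.le F π _)
  have hint : (1-p) * (ν K).toReal ≤ ∫ π, ∑ c ∈ G, cylW p F π (extC F c) ∂ν := by
    calc (1-p) * (ν K).toReal = ∫ π, K.indicator (fun _ => (1-p)) π ∂ν := by
          rw [integral_indicator_const _ hKmeas, smul_eq_mul, measureReal_def]
          ring
      _ ≤ _ := integral_mono (Integrable.indicator (integrable_const _) hKmeas)
            (integrable_finset_sum _ (fun c _ => integrable_cylW hp0.le hp1.le ν F _)) hpoint
  calc ENNReal.ofReal (1-p) * ν K = ENNReal.ofReal ((1-p) * (ν K).toReal) := by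
        rw [ENNReal.ofReal_mul (by linarith), ENNReal.ofReal_toReal (measure_ne_top ν K)]
    _ ≤ ENNReal.ofReal (∫ π, ∑ c ∈ G, cylW p F π (extC F c) ∂ν) :=
        ENNReal.ofReal_le_ofReal hint

end STmain

namespace STmain
open STgraph STmeas MeasureTheory
variable {d : ℕ}

lemma cylW_singleton {p : ℝ} (v : Vd d) (π : Setoid (Vd d)) :
    cylW p {v} π (fun _ => false) = 1 - p := by
  rw [cylW_eq_prod]
  have hbl : blocksFinset π {v}
      = {({w | w ∈ ({v} : Finset (Vd d)) ∧ π.r v w} : Set (Vd d))} := by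
    rw [blocksFinset, Finset.image_singleton]
  rw [hbl, Finset.prod_singleton, wfactor]
  have hvB : v ∈ {w | w ∈ ({v} : Finset (Vd d)) ∧ π.r v w} :=
    ⟨Finset.mem_singleton_self v, π.iseqv.refl v⟩
  rw [if_neg, if_pos]
  · ring
  · intro i _
    rfl
  · intro hall
    exact absurd (hall v hvB) (by simp)

lemma alpha_one_false {p : ℝ} (hp0 : 0 < p) (hp1 : p < 1) (ν : Measure (Setoid (Vd d)))
    [IsProbabilityMeasure ν] {μ μα : Measure (Vd d → Bool)}
    (hμ : IsColorProcess p ν μ) (hμα : IsBernoulliProduct 1 μα) (hdom : StochDom μα μ) :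
    False := by
  set E := cylEvent ({0} : Finset (Vd d)) (fun _ => false) with hEdef
  have hμαE : μα E = 0 := by
    rw [hEdef, hμα.2 ({0} : Finset (Vd d)) (fun _ => false), Finset.prod_singleton]
    simp
  have hμE : μ E = ENNReal.ofReal (1 - p) := by
    rw [hEdef, hμ.2 ({0} : Finset (Vd d)) (fun _ => false)]
    congr 1
    have heq : (fun π : Setoid (Vd d) => cylW p {0} π (fun _ => false))
        = fun _ : Setoid (Vd d) => 1 - p := funext fun π => cylW_singleton 0 π
    rw [heq, integral_const, probReal_univ, one_smul]
  have hdm : μ E ≤ μα E := by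
    apply dom_measure_le hdom E (measurableSet_cylEvent' _ _)
    intro x y h hy
    intro v hv
    have hyv := hy v hv
    cases hx : x v
    · rfl
    · exact absurd (h v hx) (by rw [hyv]; simp)
  rw [hμE, hμαE] at hdm
  have : (1:ℝ) - p ≤ 0 := ENNReal.ofReal_eq_zero.1 (le_antisymm hdm zero_le)
  linarith

theorem prop_part1 (d n : ℕ) (hd : 1 ≤ d) (hn : 1 ≤ n) (ν : Measure (Setoid (Vd d)))
    [IsProbabilityMeasure ν] (hconn : ν (connEvent d) = 1) {p α : ℝ}
    (hp : p ∈ Set.Ioo (0:ℝ) 1) (hα : α ∈ Set.Ioo (0:ℝ) 1)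
    (μα μ : Measure (Vd d → Bool)) (hμα : IsBernoulliProduct α μα)
    (hμ : IsColorProcess p ν μ) (hdom : StochDom μα μ) :
    ν (bigBlockEvent d n) ≤ ENNReal.ofReal (((7:ℝ) ^ d * (1 - α)) ^ n / (1 - p)) := by
  have h1p : (0:ℝ) < 1 - p := by linarith [hp.2]
  have h1α : (0:ℝ) ≤ 1 - α := by linarith [hα.2]
  have hK : ν (bigBlockEvent d n) ≤ ν (bigBlockEvent d n ∩ connEvent d) := by
    have hsub : bigBlockEvent d n ⊆ (bigBlockEvent d n ∩ connEvent d) ∪ (connEvent d)ᶜ := by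
      intro π hπ
      by_cases hc : π ∈ connEvent d
      · exact Or.inl ⟨hπ, hc⟩
      · exact Or.inr hc
    have hcnull : ν (connEvent d)ᶜ = 0 := by
      rw [prob_compl_eq_zero_iff measurableSet_conn]
      exact hconn
    calc ν (bigBlockEvent d n)
        ≤ ν ((bigBlockEvent d n ∩ connEvent d) ∪ (connEvent d)ᶜ) := measure_mono hsub
      _ ≤ ν (bigBlockEvent d n ∩ connEvent d) + ν (connEvent d)ᶜ := measure_union_le _ _
      _ = _ := by rw [hcnull, add_zero]
  have hlow := lower_bound hn hp.1 hp.2 ν hμ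
  have hdm := dom_measure_le hdom (Uev d n) (measurableSet_Uev d n)
    (fun x y h hy => Uev_decreasing x y h hy)
  have hup := upper_bound (n := n) hα.1.le hα.2.le hμα
  have hchain : ENNReal.ofReal (1-p) * ν (bigBlockEvent d n)
      ≤ (((2*d)^(Lix n) : ℕ) : ℝ≥0∞) * ENNReal.ofReal ((1-α)^n) :=
    le_trans (mul_le_mul_right hK _) (le_trans hlow (le_trans hdm hup))
  set cR : ℝ := (((2*d)^(Lix n) : ℕ) : ℝ) * (1-α)^n with hcRdef
  have hcR0 : 0 ≤ cR := by positivity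
  have hA : (((2*d)^(Lix n) : ℕ) : ℝ≥0∞) * ENNReal.ofReal ((1-α)^n) = ENNReal.ofReal cR := by
    rw [hcRdef, ENNReal.ofReal_mul (by positivity), ENNReal.ofReal_natCast]
  rw [hA] at hchain
  have hcle : cR ≤ ((7:ℝ)^d * (1-α))^n := by
    rw [mul_pow]
    apply mul_le_mul_of_nonneg_right _ (pow_nonneg h1α n)
    have hnat : (2*d)^(Lix n) ≤ (7^d)^n := by
      have h7 : 1 ≤ 7^d := Nat.one_le_pow d 7 (by omega)
      calc (2*d)^(Lix n) = ((2*d)^2)^(n-1) := by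
            rw [show Lix n = 2*(n-1) from rfl, pow_mul]
        _ ≤ (7^d)^(n-1) := Nat.pow_le_pow_left (four_sq_le_seven_pow d hd) _
        _ ≤ (7^d)^n := Nat.pow_le_pow_right (by omega) (by omega)
    calc (((2*d)^(Lix n) : ℕ) : ℝ) ≤ (((7^d)^n : ℕ) : ℝ) := by exact_mod_cast hnat
      _ = ((7:ℝ)^d)^n := by push_cast; ring
  have hne0 : ENNReal.ofReal (1-p) ≠ 0 := (ENNReal.ofReal_pos.2 h1p).ne'
  have hdiv : ν (bigBlockEvent d n) ≤ ENNReal.ofReal cR / ENNReal.ofReal (1-p) := by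
    rw [ENNReal.le_div_iff_mul_le (Or.inl hne0) (Or.inl ENNReal.ofReal_ne_top)]
    rw [mul_comm]
    exact hchain
  refine le_trans hdiv ?_
  rw [← ENNReal.ofReal_div_of_pos h1p]
  apply ENNReal.ofReal_le_ofReal
  exact (div_le_div_iff_of_pos_right h1p).2 hcle

end STmain
/-- **Proposition (Steif–Tykesson, Proposition 5.5(iv)).**
Let `d ≥ 1` and let `ν` be a stationary RER on `ℤ^d` whose blocks are a.s. connected.
If `p, α ∈ (0,1)` are such that `Π_α ≼ Φ_p(ν)`, then for all `n ≥ 1`,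
`ν(|π(0)| ≥ n) ≤ (7^d (1-α))^n / (1-p)`.  Consequently, if `ν(|π(0)| ≥ n) ≥ C γ^n` for
infinitely many `n`, then for every `p ∈ (0,1)`, `sup{α : Π_α ≼ Φ_p(ν)} ≤ 1 - γ/7^d`. -/
theorem origin_cluster_bound_of_domination_connected
    (d : ℕ) (hd : 1 ≤ d) (ν : Measure (Setoid (Vd d))) [IsProbabilityMeasure ν]
    (hstat : StationaryRER ν)
    (hconn : ν {π : Setoid (Vd d) | ∀ B ∈ π.classes, LatConnected B} = 1) :
    (∀ p α : ℝ, p ∈ Set.Ioo (0:ℝ) 1 → α ∈ Set.Ioo (0:ℝ) 1 →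
      (∃ μα μ : Measure (Vd d → Bool),
        IsBernoulliProduct α μα ∧ IsColorProcess p ν μ ∧ StochDom μα μ) →
      ∀ n : ℕ, 1 ≤ n →
        ν (bigBlockEvent d n) ≤
          ENNReal.ofReal (((7:ℝ) ^ d * (1 - α)) ^ n / (1 - p))) ∧
    (∀ C γ : ℝ, 0 < C → 0 < γ → γ ≤ 1 →
      {n : ℕ | ENNReal.ofReal (C * γ ^ n) ≤ ν (bigBlockEvent d n)}.Infinite →
      ∀ p : ℝ, p ∈ Set.Ioo (0:ℝ) 1 → ∀ μ : Measure (Vd d → Bool), IsColorProcess p ν μ →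
        sSup {α : ℝ | 0 ≤ α ∧ α ≤ 1 ∧
            ∃ μα : Measure (Vd d → Bool), IsBernoulliProduct α μα ∧ StochDom μα μ} ≤
          1 - γ / (7:ℝ) ^ d) :=  by
  have hconn' : ν (STmeas.connEvent d) = 1 := hconn
  constructor
  · rintro p α hp hα ⟨μα, μ, hμα, hμ, hdom⟩ n hn
    exact STmain.prop_part1 d n hd hn ν hconn' hp hα μα μ hμα hμ hdom
  · intro C γ hC hγ0 hγ1 hinf p hp μ hμ
    have h7 : (0:ℝ) < (7:ℝ)^d := by positivity
    have h71 : (1:ℝ) ≤ (7:ℝ)^d := by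
      calc (1:ℝ) = 1^d := (one_pow d).symm
        _ ≤ 7^d := pow_le_pow_left₀ (by norm_num) (by norm_num) d
    have hb0 : 0 ≤ 1 - γ / (7:ℝ)^d := by
      have hle : γ / (7:ℝ)^d ≤ 1 := by
        rw [div_le_one h7]
        linarith
      linarith
    apply Real.sSup_le _ hb0
    rintro α ⟨hα0, hα1, μα, hμα, hdom⟩
    rcases eq_or_lt_of_le hα0 with h0 | h0
    · rw [← h0]
      exact hb0
    rcases eq_or_lt_of_le hα1 with h1 | h1
    · exfalso
      rw [h1] at hμα
      exact STmain.alpha_one_false hp.1 hp.2 ν hμ hμα hdom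
    have hbound : ∀ n : ℕ, 1 ≤ n → ν (bigBlockEvent d n)
        ≤ ENNReal.ofReal (((7:ℝ)^d * (1-α))^n / (1-p)) :=
      fun n hn => STmain.prop_part1 d n hd hn ν hconn' hp ⟨h0, h1⟩ μα μ hμα hμ hdom
    set t := (7:ℝ)^d * (1-α) with htdef
    have h1p : (0:ℝ) < 1 - p := by linarith [hp.2]
    have ht0 : 0 ≤ t := mul_nonneg (le_of_lt h7) (by linarith)
    have hsuff : γ ≤ t → α ≤ 1 - γ / (7:ℝ)^d := by
      intro h
      have h2 : γ / (7:ℝ)^d ≤ 1 - α := by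
        rw [div_le_iff₀ h7, mul_comm]
        exact h.trans_eq htdef
      linarith
    apply hsuff
    by_contra hlt
    push_neg at hlt
    have hdiv0 : 0 ≤ t/γ := div_nonneg ht0 hγ0.le
    have hdiv1 : t/γ < 1 := (div_lt_one hγ0).2 hlt
    obtain ⟨N, hN⟩ := exists_pow_lt_of_lt_one (mul_pos hC h1p) hdiv1
    obtain ⟨m, hmset, hmgt⟩ := hinf.exists_gt N
    have hm1 : 1 ≤ m := by omega
    have hreal : C * γ^m ≤ t^m / (1-p) := by
      have hh := le_trans hmset (hbound m hm1)
      rwa [ENNReal.ofReal_le_ofReal_iff (by positivity)] at hh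
    have h2 : C * γ^m * (1-p) ≤ t^m := (le_div_iff₀ h1p).1 hreal
    have h3 : C * (1-p) ≤ (t/γ)^m := by
      rw [div_pow, le_div_iff₀ (pow_pos hγ0 m)]
      calc C*(1-p)*γ^m = C * γ^m * (1-p) := by ring
        _ ≤ t^m := h2
    have h4 : (t/γ)^m ≤ (t/γ)^N := pow_le_pow_of_le_one hdiv0 hdiv1.le (by omega)
    linarith
end
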